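/- arXiv:2510.04566 — 8 statements merged into one kernel-verified Lean document; each statement's English description precedes it below -/
import Mathlib

section
/- Let (X, ν) : S¹_{2π} × (0,∞) → ℝ² × S¹ be a smooth family of Legendre curves with moving frame {ν, μ} (μ = Jν), Legendre curvature (ℓ, β), and velocity decomposition ∂ₜX = Nν + Tμ. Then the time derivative of β satisfies ∂ₜβ = Nℓ + ∂ᵤT. -/
open Real

def dot (a b : ℝ × ℝ) : ℝ := a.1 * b.1 + a.2 * b.2

def Jrot (p : ℝ × ℝ) : ℝ × ℝ := (-p.2, p.1)

section helpers

variable {A B : ℝ → ℝ × ℝ} {A' B' : ℝ × ℝ} {x : ℝ}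

private lemma hasDerivAt_dot (hA : HasDerivAt A A' x) (hB : HasDerivAt B B' x) :
    HasDerivAt (fun t => dot (A t) (B t)) (dot A' (B x) + dot (A x) B') x := by
  have hA1 : HasDerivAt (fun t => (A t).1) A'.1 x :=
    (ContinuousLinearMap.fst ℝ ℝ ℝ).hasFDerivAt.comp_hasDerivAt x hA
  have hA2 : HasDerivAt (fun t => (A t).2) A'.2 x :=
    (ContinuousLinearMap.snd ℝ ℝ ℝ).hasFDerivAt.comp_hasDerivAt x hA
  have hB1 : HasDerivAt (fun t => (B t).1) B'.1 x :=
    (ContinuousLinearMap.fst ℝ ℝ ℝ).hasFDerivAt.comp_hasDerivAt x hB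
  have hB2 : HasDerivAt (fun t => (B t).2) B'.2 x :=
    (ContinuousLinearMap.snd ℝ ℝ ℝ).hasFDerivAt.comp_hasDerivAt x hB
  have h := (hA1.mul hB1).add (hA2.mul hB2)
  refine h.congr_deriv ?_
  simp only [dot]; ring

private lemma hasDerivAt_Jrot (hA : HasDerivAt A A' x) :
    HasDerivAt (fun t => Jrot (A t)) (Jrot A') x := by
  have hA1 : HasDerivAt (fun t => (A t).1) A'.1 x :=
    (ContinuousLinearMap.fst ℝ ℝ ℝ).hasFDerivAt.comp_hasDerivAt x hA
  have hA2 : HasDerivAt (fun t => (A t).2) A'.2 x :=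
    (ContinuousLinearMap.snd ℝ ℝ ℝ).hasFDerivAt.comp_hasDerivAt x hA
  exact hA2.neg.prodMk hA1

private lemma hasDerivAt_slot1 {E : Type*} [NormedAddCommGroup E] [NormedSpace ℝ E]
    {f : ℝ × ℝ → E} {D : ℝ × ℝ →L[ℝ] E} {a b : ℝ}
    (h : HasFDerivAt f D (a, b)) :
    HasDerivAt (fun u' => f (u', b)) (D (1, 0)) a := by
  have hg : HasDerivAt (fun u' : ℝ => ((u', b) : ℝ × ℝ)) ((1 : ℝ), (0 : ℝ)) a :=
    (hasDerivAt_id a).prodMk (hasDerivAt_const a b)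
  exact h.comp_hasDerivAt a hg

private lemma hasDerivAt_slot2 {E : Type*} [NormedAddCommGroup E] [NormedSpace ℝ E]
    {f : ℝ × ℝ → E} {D : ℝ × ℝ →L[ℝ] E} {a b : ℝ}
    (h : HasFDerivAt f D (a, b)) :
    HasDerivAt (fun t' => f (a, t')) (D (0, 1)) b := by
  have hg : HasDerivAt (fun t' : ℝ => ((a, t') : ℝ × ℝ)) ((0 : ℝ), (1 : ℝ)) b :=
    (hasDerivAt_const b a).prodMk (hasDerivAt_id b)
  exact h.comp_hasDerivAt b hg

private lemma hasDerivAt_clm_apply_const {c : ℝ → ℝ × ℝ →L[ℝ] ℝ × ℝ}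
    {c' : ℝ × ℝ →L[ℝ] ℝ × ℝ} {x : ℝ} (hc : HasDerivAt c c' x) (v : ℝ × ℝ) :
    HasDerivAt (fun t => c t v) (c' v) x := by
  simpa using hc.clm_apply (hasDerivAt_const x v)

end helpers

/-- For a smooth family of Legendre curves with velocity decomposition
`∂ₜX = Nν + Tμ`, the time derivative of `β` satisfies `∂ₜβ = Nℓ + ∂ᵤT`. -/
theorem beta_evolution
    (X ν μ : ℝ → ℝ → ℝ × ℝ) (ℓ β N T : ℝ → ℝ → ℝ)
    (hXsm : ContDiffOn ℝ (⊤ : ℕ∞) (fun p : ℝ × ℝ => X p.1 p.2) {p : ℝ × ℝ | 0 < p.2})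
    (hνsm : ContDiffOn ℝ (⊤ : ℕ∞) (fun p : ℝ × ℝ => ν p.1 p.2) {p : ℝ × ℝ | 0 < p.2})
    (hXper : ∀ u t, 0 < t → X (u + 2 * π) t = X u t)
    (hνper : ∀ u t, 0 < t → ν (u + 2 * π) t = ν u t)
    (hunit : ∀ u t, 0 < t → dot (ν u t) (ν u t) = 1)
    (hLeg : ∀ u t, 0 < t → dot (deriv (fun u' => X u' t) u) (ν u t) = 0)
    (hμ : ∀ u t, μ u t = Jrot (ν u t))
    (hℓ : ∀ u t, ℓ u t = dot (deriv (fun u' => ν u' t) u) (μ u t))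
    (hβ : ∀ u t, β u t = dot (deriv (fun u' => X u' t) u) (μ u t))
    (hN : ∀ u t, N u t = dot (deriv (fun t' => X u t') t) (ν u t))
    (hT : ∀ u t, T u t = dot (deriv (fun t' => X u t') t) (μ u t)) :
    ∀ u t, 0 < t →
      deriv (fun t' => β u t') t = N u t * ℓ u t + deriv (fun u' => T u' t) u := by
  intro u t ht
  have hs : IsOpen {p : ℝ × ℝ | 0 < p.2} := isOpen_lt continuous_const continuous_snd
  set F : ℝ × ℝ → ℝ × ℝ := fun p => X p.1 p.2 with hFdef
  set G : ℝ × ℝ → ℝ × ℝ := fun p => ν p.1 p.2 with hGdef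
  -- smoothness at points of the open set
  have hFat : ∀ p : ℝ × ℝ, 0 < p.2 → ContDiffAt ℝ (⊤ : ℕ∞) F p := fun p hp =>
    hXsm.contDiffAt (hs.mem_nhds hp)
  have hGat : ∀ p : ℝ × ℝ, 0 < p.2 → ContDiffAt ℝ (⊤ : ℕ∞) G p := fun p hp =>
    hνsm.contDiffAt (hs.mem_nhds hp)
  have hFd : ∀ p : ℝ × ℝ, 0 < p.2 → HasFDerivAt F (fderiv ℝ F p) p := fun p hp =>
    ((hFat p hp).differentiableAt (by simp)).hasFDerivAt
  have hGd : ∀ p : ℝ × ℝ, 0 < p.2 → HasFDerivAt G (fderiv ℝ G p) p := fun p hp =>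
    ((hGat p hp).differentiableAt (by simp)).hasFDerivAt
  -- second derivative of F at (u,t)
  have hD2 : HasFDerivAt (fderiv ℝ F) (fderiv ℝ (fderiv ℝ F) (u, t)) (u, t) := by
    have : ContDiffAt ℝ (⊤ : ℕ∞) (fderiv ℝ F) (u, t) :=
      (hFat (u, t) ht).fderiv_right ((by simp))
    exact (this.differentiableAt (by simp)).hasFDerivAt
  -- symmetry of second derivative
  have hsymm : fderiv ℝ (fderiv ℝ F) (u, t) (0, 1) (1, 0)
      = fderiv ℝ (fderiv ℝ F) (u, t) (1, 0) (0, 1) := by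
    have h2 : ContDiffAt ℝ 2 F (u, t) := (hFat (u, t) ht).of_le (WithTop.coe_le_coe.mpr le_top)
    exact h2.isSymmSndFDerivAt (by norm_num) _ _
  -- abbreviations for first derivatives at (u,t)
  set Xu : ℝ × ℝ := fderiv ℝ F (u, t) (1, 0) with hXu
  set Xt : ℝ × ℝ := fderiv ℝ F (u, t) (0, 1) with hXt
  set νu : ℝ × ℝ := fderiv ℝ G (u, t) (1, 0) with hνu
  set νt : ℝ × ℝ := fderiv ℝ G (u, t) (0, 1) with hνt
  set W : ℝ × ℝ := fderiv ℝ (fderiv ℝ F) (u, t) (1, 0) (0, 1) with hW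
  -- derivative of u ↦ X u t etc.
  have hXslot1 : ∀ t' : ℝ, 0 < t' →
      deriv (fun u' => X u' t') u = fderiv ℝ F (u, t') (1, 0) := fun t' ht' =>
    (hasDerivAt_slot1 (hFd (u, t') ht')).deriv
  have hXslot2 : ∀ u' : ℝ,
      deriv (fun t' => X u' t') t = fderiv ℝ F (u', t) (0, 1) := fun u' =>
    (hasDerivAt_slot2 (hFd (u', t) ht)).deriv
  have hνslot1 : deriv (fun u' => ν u' t) u = νu :=
    (hasDerivAt_slot1 (hGd (u, t) ht)).deriv
  -- time derivative of β
  have hβderiv : deriv (fun t' => β u t') t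
      = dot (fderiv ℝ (fderiv ℝ F) (u, t) (0, 1) (1, 0)) (Jrot (ν u t))
        + dot Xu (Jrot νt) := by
    have hA : HasDerivAt (fun t' => fderiv ℝ F (u, t') (1, 0))
        (fderiv ℝ (fderiv ℝ F) (u, t) (0, 1) (1, 0)) t :=
      hasDerivAt_clm_apply_const (hasDerivAt_slot2 hD2) (1, 0)
    have hB : HasDerivAt (fun t' => Jrot (G (u, t'))) (Jrot νt) t :=
      hasDerivAt_Jrot (hasDerivAt_slot2 (hGd (u, t) ht))
    have hφ := hasDerivAt_dot hA hB
    have heq : (fun t' => β u t')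
        =ᶠ[nhds t] fun t' => dot (fderiv ℝ F (u, t') (1, 0)) (Jrot (G (u, t'))) := by
      filter_upwards [eventually_gt_nhds ht] with t' ht'
      rw [hβ, hμ, hXslot1 t' ht']
    have := (hφ.congr_of_eventuallyEq heq).deriv
    rw [this]
  -- space derivative of T
  have hTderiv : deriv (fun u' => T u' t) u
      = dot W (Jrot (ν u t)) + dot Xt (Jrot νu) := by
    have hA : HasDerivAt (fun u' => fderiv ℝ F (u', t) (0, 1)) W u :=
      hasDerivAt_clm_apply_const (hasDerivAt_slot1 hD2) (0, 1)
    have hB : HasDerivAt (fun u' => Jrot (G (u', t))) (Jrot νu) u :=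
      hasDerivAt_Jrot (hasDerivAt_slot1 (hGd (u, t) ht))
    have hφ := hasDerivAt_dot hA hB
    have heq : (fun u' => T u' t)
        = fun u' => dot (fderiv ℝ F (u', t) (0, 1)) (Jrot (G (u', t))) := by
      funext u'
      rw [hT, hμ, hXslot2 u']
    rw [heq, hφ.deriv]
  -- orthogonality relations
  have hνtν : dot νt (ν u t) + dot (ν u t) νt = 0 := by
    have h1 : HasDerivAt (fun t' => dot (G (u, t')) (G (u, t')))
        (dot νt (ν u t) + dot (ν u t) νt) t := by
      have hg := hasDerivAt_slot2 (hGd (u, t) ht)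
      exact hasDerivAt_dot hg hg
    have h2 : HasDerivAt (fun t' => dot (G (u, t')) (G (u, t'))) 0 t := by
      apply (hasDerivAt_const t (1 : ℝ)).congr_of_eventuallyEq
      filter_upwards [eventually_gt_nhds ht] with t' ht'
      exact hunit u t' ht'
    exact h1.unique h2
  have hνuν : dot νu (ν u t) + dot (ν u t) νu = 0 := by
    have h1 : HasDerivAt (fun u' => dot (G (u', t)) (G (u', t)))
        (dot νu (ν u t) + dot (ν u t) νu) u := by
      have hg := hasDerivAt_slot1 (hGd (u, t) ht)
      exact hasDerivAt_dot hg hg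
    have h2 : HasDerivAt (fun u' => dot (G (u', t)) (G (u', t))) 0 u := by
      apply (hasDerivAt_const u (1 : ℝ)).congr_of_eventuallyEq
      exact Filter.Eventually.of_forall fun u' => hunit u' t ht
    exact h1.unique h2
  have hXuν : dot Xu (ν u t) = 0 := by
    have h0 := hLeg u t ht
    rw [hXslot1 t ht] at h0
    exact h0
  -- put everything together
  rw [hβderiv, hTderiv, hsymm, hN, hℓ, hμ, hνslot1, hXslot2]
  have hu1 : (ν u t).1 * (ν u t).1 + (ν u t).2 * (ν u t).2 = 1 := hunit u t ht
  simp only [dot, Jrot] at hνtν hνuν hXuν hu1 ⊢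
  linear_combination ((ν u t).2 * νt.1 - (ν u t).1 * νt.2) * hXuν
    + ((ν u t).1 * Xu.2 - (ν u t).2 * Xu.1) / 2 * hνtν
    + ((ν u t).2 * Xt.1 - (ν u t).1 * Xt.2) / 2 * hνuν
    + (νt.2 * Xu.1 - νt.1 * Xu.2 - νu.2 * Xt.1 + νu.1 * Xt.2) * hu1
end

section
/- Let (X, ν) be a smooth family of Legendre curves with frame {ν, μ}, Legendre curvature (ℓ, β), and velocity ∂ₜX = Nν + Tμ. Then β ∂ₜμ = (∂ᵤN - Tℓ) ν and β ∂ₜν = (Tℓ - ∂ᵤN) μ. -/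
open Real

lemma dot_comm' (a b : ℝ × ℝ) : dot a b = dot b a := by simp [dot]; ring

lemma dot_smul_right' (c : ℝ) (a b : ℝ × ℝ) : dot a (c • b) = c * dot a b := by
  simp [dot]; ring

lemma dot_Jrot_Jrot (a b : ℝ × ℝ) : dot (Jrot a) (Jrot b) = dot a b := by
  simp [dot, Jrot]; ring

lemma Jrot_smul (c : ℝ) (a : ℝ × ℝ) : Jrot (c • a) = c • Jrot a := by
  simp [Jrot]

lemma Jrot_Jrot (a : ℝ × ℝ) : Jrot (Jrot a) = -a := by
  simp [Jrot, Prod.ext_iff]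

lemma frame_expand (n w : ℝ × ℝ) (h : dot n n = 1) :
    w = dot w n • n + dot w (Jrot n) • Jrot n := by
  simp only [dot, Jrot] at *
  refine Prod.ext ?_ ?_ <;> simp
  · linear_combination -w.1 * h
  · linear_combination -w.2 * h

lemma hasDerivAt_dot' {f g : ℝ → ℝ × ℝ} {f' g' : ℝ × ℝ} {x : ℝ}
    (hf : HasDerivAt f f' x) (hg : HasDerivAt g g' x) :
    HasDerivAt (fun x => dot (f x) (g x)) (dot f' (g x) + dot (f x) g') x := by
  have h1 : HasDerivAt (fun x => (f x).1) f'.1 x := by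
    exact ((ContinuousLinearMap.fst ℝ ℝ ℝ).hasFDerivAt.comp_hasDerivAt x hf)
  have h2 : HasDerivAt (fun x => (f x).2) f'.2 x := by
    exact ((ContinuousLinearMap.snd ℝ ℝ ℝ).hasFDerivAt.comp_hasDerivAt x hf)
  have h3 : HasDerivAt (fun x => (g x).1) g'.1 x := by
    exact ((ContinuousLinearMap.fst ℝ ℝ ℝ).hasFDerivAt.comp_hasDerivAt x hg)
  have h4 : HasDerivAt (fun x => (g x).2) g'.2 x := by
    exact ((ContinuousLinearMap.snd ℝ ℝ ℝ).hasFDerivAt.comp_hasDerivAt x hg)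
  have := ((h1.mul h3).add (h2.mul h4))
  simp only [dot]
  exact this.congr_deriv (by ring)

lemma hasDerivAt_Jrot' {f : ℝ → ℝ × ℝ} {f' : ℝ × ℝ} {x : ℝ}
    (hf : HasDerivAt f f' x) :
    HasDerivAt (fun x => Jrot (f x)) (Jrot f') x := by
  have h1 : HasDerivAt (fun x => (f x).1) f'.1 x := by
    exact ((ContinuousLinearMap.fst ℝ ℝ ℝ).hasFDerivAt.comp_hasDerivAt x hf)
  have h2 : HasDerivAt (fun x => (f x).2) f'.2 x := by
    exact ((ContinuousLinearMap.snd ℝ ℝ ℝ).hasFDerivAt.comp_hasDerivAt x hf)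
  exact (h2.neg).prodMk h1

/-- Evolution of the moving frame of a smooth family of Legendre curves:
`β ∂ₜμ = (∂ᵤN - Tℓ) ν` and `β ∂ₜν = (Tℓ - ∂ᵤN) μ`. -/
theorem frame_evolution
    (X ν μ : ℝ → ℝ → ℝ × ℝ) (ℓ β N T : ℝ → ℝ → ℝ)
    (hXsm : ContDiffOn ℝ (⊤ : ℕ∞) (fun p : ℝ × ℝ => X p.1 p.2) {p : ℝ × ℝ | 0 < p.2})
    (hνsm : ContDiffOn ℝ (⊤ : ℕ∞) (fun p : ℝ × ℝ => ν p.1 p.2) {p : ℝ × ℝ | 0 < p.2})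
    (hXper : ∀ u t, 0 < t → X (u + 2 * π) t = X u t)
    (hνper : ∀ u t, 0 < t → ν (u + 2 * π) t = ν u t)
    (hunit : ∀ u t, 0 < t → dot (ν u t) (ν u t) = 1)
    (hLeg : ∀ u t, 0 < t → dot (deriv (fun u' => X u' t) u) (ν u t) = 0)
    (hμ : ∀ u t, μ u t = Jrot (ν u t))
    (hℓ : ∀ u t, ℓ u t = dot (deriv (fun u' => ν u' t) u) (μ u t))
    (hβ : ∀ u t, β u t = dot (deriv (fun u' => X u' t) u) (μ u t))
    (hN : ∀ u t, N u t = dot (deriv (fun t' => X u t') t) (ν u t))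
    (hT : ∀ u t, T u t = dot (deriv (fun t' => X u t') t) (μ u t)) :
    ∀ u t, 0 < t →
      β u t • deriv (fun t' => μ u t') t
        = (deriv (fun u' => N u' t) u - T u t * ℓ u t) • ν u t ∧
      β u t • deriv (fun t' => ν u t') t
        = (T u t * ℓ u t - deriv (fun u' => N u' t) u) • μ u t := by
  intro u t ht
  set S : Set (ℝ × ℝ) := {p : ℝ × ℝ | 0 < p.2} with hSdef
  have hSopen : IsOpen S := isOpen_lt continuous_const continuous_snd
  set F : ℝ × ℝ → ℝ × ℝ := fun p => X p.1 p.2 with hFdef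
  set G : ℝ × ℝ → ℝ × ℝ := fun p => ν p.1 p.2 with hGdef
  have hmemS : ∀ {a b : ℝ}, 0 < b → (a, b) ∈ S := fun {a b} hb => hb
  have hFd : ∀ p ∈ S, DifferentiableAt ℝ F p := fun p hp =>
    (hXsm.contDiffAt (hSopen.mem_nhds hp)).differentiableAt (by simp)
  have hGd : ∀ p ∈ S, DifferentiableAt ℝ G p := fun p hp =>
    (hνsm.contDiffAt (hSopen.mem_nhds hp)).differentiableAt (by simp)
  -- curves
  have hcu : ∀ (u' t' : ℝ), HasDerivAt (fun x : ℝ => ((x, t') : ℝ × ℝ)) (1, 0) u' :=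
    fun u' t' => (hasDerivAt_id u').prodMk (hasDerivAt_const u' t')
  have hct : ∀ (u' t' : ℝ), HasDerivAt (fun x : ℝ => ((u', x) : ℝ × ℝ)) (0, 1) t' :=
    fun u' t' => (hasDerivAt_const t' u').prodMk (hasDerivAt_id t')
  -- partial derivatives
  have hXu : ∀ u' t', 0 < t' →
      HasDerivAt (fun x => X x t') (fderiv ℝ F (u', t') (1, 0)) u' := fun u' t' ht' =>
    (hFd _ (hmemS ht')).hasFDerivAt.comp_hasDerivAt (l := F) u' (hcu u' t')
  have hXt : ∀ u' t', 0 < t' →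
      HasDerivAt (fun x => X u' x) (fderiv ℝ F (u', t') (0, 1)) t' := fun u' t' ht' =>
    (hFd _ (hmemS ht')).hasFDerivAt.comp_hasDerivAt t' (hct u' t')
  have hνu : ∀ u' t', 0 < t' →
      HasDerivAt (fun x => ν x t') (fderiv ℝ G (u', t') (1, 0)) u' := fun u' t' ht' =>
    (hGd _ (hmemS ht')).hasFDerivAt.comp_hasDerivAt (l := G) u' (hcu u' t')
  have hνt : ∀ u' t', 0 < t' →
      HasDerivAt (fun x => ν u' x) (fderiv ℝ G (u', t') (0, 1)) t' := fun u' t' ht' =>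
    (hGd _ (hmemS ht')).hasFDerivAt.comp_hasDerivAt t' (hct u' t')
  -- second derivative of F
  have hfd1 : ContDiffOn ℝ (((⊤ : ℕ∞) : WithTop ℕ∞)) (fderiv ℝ F) S :=
    hXsm.fderiv_of_isOpen hSopen (by simp)
  have hf2d : DifferentiableAt ℝ (fderiv ℝ F) (u, t) :=
    (hfd1.contDiffAt (hSopen.mem_nhds (hmemS ht))).differentiableAt (by norm_num)
  set f'' := fderiv ℝ (fderiv ℝ F) (u, t) with hf''def
  have hsymm : ∀ v w, f'' v w = f'' w v := by
    intro v w
    refine second_derivative_symmetric_of_eventually (f := F) (f' := fderiv ℝ F) ?_ hf2d.hasFDerivAt v w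
    filter_upwards [hSopen.mem_nhds (hmemS ht)] with y hy using (hFd y hy).hasFDerivAt
  -- mixed partials
  have hMu : HasDerivAt (fun u' => fderiv ℝ F (u', t) (0, 1)) (f'' (1, 0) (0, 1)) u := by
    have h1 : HasDerivAt (fun u' => fderiv ℝ F (u', t)) (f'' (1, 0)) u :=
      hf2d.hasFDerivAt.comp_hasDerivAt u (hcu u t)
    exact ((ContinuousLinearMap.apply ℝ (ℝ × ℝ) ((0 : ℝ), (1 : ℝ))).hasFDerivAt.comp_hasDerivAt u h1)
  have hMt : HasDerivAt (fun t' => fderiv ℝ F (u, t') (1, 0)) (f'' (0, 1) (1, 0)) t := by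
    have h1 : HasDerivAt (fun t' => fderiv ℝ F (u, t')) (f'' (0, 1)) t :=
      hf2d.hasFDerivAt.comp_hasDerivAt t (hct u t)
    exact ((ContinuousLinearMap.apply ℝ (ℝ × ℝ) ((1 : ℝ), (0 : ℝ))).hasFDerivAt.comp_hasDerivAt t h1)
  -- shorthands
  set Fu := fderiv ℝ F (u, t) (1, 0) with hFu
  set Ft := fderiv ℝ F (u, t) (0, 1) with hFt
  set Gu := fderiv ℝ G (u, t) (1, 0) with hGu
  set Gt := fderiv ℝ G (u, t) (0, 1) with hGt
  set nv := ν u t with hnv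
  have hμv : μ u t = Jrot nv := hμ u t
  have hun : dot nv nv = 1 := hunit u t ht
  -- orthogonality: dot Gu nv = 0
  have hGuν : dot Gu nv = 0 := by
    have hder := hasDerivAt_dot' (hνu u t ht) (hνu u t ht)
    have hconst : (fun u' => dot (ν u' t) (ν u' t)) = fun _ => (1 : ℝ) :=
      funext fun u' => hunit u' t ht
    have h0 : deriv (fun u' => dot (ν u' t) (ν u' t)) u = 0 := by
      rw [hconst]; simp
    have := hder.deriv
    rw [h0] at this
    have hc := dot_comm' nv Gu
    rw [← hnv] at this
    linarith [this, hc]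
  have hGtν : dot Gt nv = 0 := by
    have hder := hasDerivAt_dot' (hνt u t ht) (hνt u t ht)
    have hev : (fun t' => dot (ν u t') (ν u t')) =ᶠ[nhds t] fun _ => (1 : ℝ) := by
      filter_upwards [eventually_gt_nhds ht] with t' ht' using hunit u t' ht'
    have h0 : deriv (fun t' => dot (ν u t') (ν u t')) t = 0 := by
      rw [hev.deriv_eq]; simp
    have := hder.deriv
    rw [h0] at this
    have hc := dot_comm' nv Gt
    rw [← hnv] at this
    linarith [this, hc]
  -- Legendre at (u,t)
  have hFuν : dot Fu nv = 0 := by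
    have := hLeg u t ht
    rwa [(hXu u t ht).deriv] at this
  -- scalar values
  have hβv : β u t = dot Fu (Jrot nv) := by rw [hβ, (hXu u t ht).deriv, hμv]
  have hTv : T u t = dot Ft (Jrot nv) := by rw [hT, (hXt u t ht).deriv, hμv]
  have hℓv : ℓ u t = dot Gu (Jrot nv) := by rw [hℓ, (hνu u t ht).deriv, hμv]
  set φ : ℝ := dot Gt (Jrot nv) with hφ
  -- expansions
  have hFuExp : Fu = β u t • Jrot nv := by
    have := frame_expand nv Fu hun
    rw [hFuν, ← hβv] at this
    simpa using this
  have hGuExp : Gu = ℓ u t • Jrot nv := by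
    have := frame_expand nv Gu hun
    rw [hGuν, ← hℓv] at this
    simpa using this
  have hGtExp : Gt = φ • Jrot nv := by
    have := frame_expand nv Gt hun
    rw [hGtν, ← hφ] at this
    simpa using this
  -- Clairaut relation: dot (f'' (1,0) (0,1)) nv + dot Fu Gt = 0
  have hClair : dot (f'' (1, 0) (0, 1)) nv + dot Fu Gt = 0 := by
    have hder := hasDerivAt_dot' hMt (hνt u t ht)
    have hev : (fun t' => dot (fderiv ℝ F (u, t') (1, 0)) (ν u t')) =ᶠ[nhds t]
        fun _ => (0 : ℝ) := by
      filter_upwards [eventually_gt_nhds ht] with t' ht'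
      have := hLeg u t' ht'
      rwa [(hXu u t' ht').deriv] at this
    have h0 : deriv (fun t' => dot (fderiv ℝ F (u, t') (1, 0)) (ν u t')) t = 0 := by
      rw [hev.deriv_eq]; simp
    have := hder.deriv
    rw [h0] at this
    rw [hsymm (0,1) (1,0)] at this
    rw [← hnv, ← hFu, ← hGt] at this
    linarith
  -- derivative of N in u
  have hdN : deriv (fun u' => N u' t) u
      = dot (f'' (1, 0) (0, 1)) nv + dot Ft Gu := by
    have hNfun : (fun u' => N u' t)
        = fun u' => dot (fderiv ℝ F (u', t) (0, 1)) (ν u' t) :=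
      funext fun u' => by rw [hN, (hXt u' t ht).deriv]
    rw [hNfun]
    exact (hasDerivAt_dot' hMu (hνu u t ht)).deriv
  -- scalar bookkeeping
  have hμμ : dot (Jrot nv) (Jrot nv) = 1 := by rw [dot_Jrot_Jrot]; exact hun
  have hFuGt : dot Fu Gt = β u t * φ := by
    rw [hFuExp, hGtExp, dot_smul_right', dot_comm', dot_smul_right', hμμ]; ring
  have hFtGu : dot Ft Gu = ℓ u t * T u t := by
    rw [hGuExp, dot_smul_right', ← hTv]
  have key : β u t * φ = T u t * ℓ u t - deriv (fun u' => N u' t) u := by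
    rw [hdN, hFtGu]
    have := hClair
    rw [hFuGt] at this
    linarith
  -- final goals
  have hderν : deriv (fun t' => ν u t') t = Gt := (hνt u t ht).deriv
  have hderμ : deriv (fun t' => μ u t') t = Jrot Gt := by
    have hfun : (fun t' => μ u t') = fun t' => Jrot (ν u t') := funext fun t' => hμ u t'
    rw [hfun]
    exact (hasDerivAt_Jrot' (hνt u t ht)).deriv
  constructor
  · rw [hderμ, hGtExp, Jrot_smul, Jrot_Jrot, smul_comm, smul_smul,
      smul_neg, ← neg_smul]
    rw [show -(φ * β u t) = deriv (fun u' => N u' t) u - T u t * ℓ u t by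
      linear_combination -key]
  · rw [hderν, hGtExp, smul_smul, key, hμv]
end

section
/- Let (X, ν) be a smooth family of Legendre curves with angle function Θ(u,t) satisfying ν = (sin Θ, -cos Θ). Then ∂ᵤΘ = ℓ and β ∂ₜΘ = Tℓ - ∂ᵤN, where (ℓ, β) is the Legendre curvature, N the normal velocity and T the tangent velocity. -/
open Real

private lemma hd_fst {f : ℝ → ℝ × ℝ} {f' : ℝ × ℝ} {x : ℝ}
    (h : HasDerivAt f f' x) : HasDerivAt (fun x => (f x).1) f'.1 x := by
  exact (ContinuousLinearMap.fst ℝ ℝ ℝ).hasFDerivAt.comp_hasDerivAt x h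

private lemma hd_snd {f : ℝ → ℝ × ℝ} {f' : ℝ × ℝ} {x : ℝ}
    (h : HasDerivAt f f' x) : HasDerivAt (fun x => (f x).2) f'.2 x := by
  exact (ContinuousLinearMap.snd ℝ ℝ ℝ).hasFDerivAt.comp_hasDerivAt x h

private lemma hd_dot {a b : ℝ → ℝ × ℝ} {a' b' : ℝ × ℝ} {x : ℝ}
    (ha : HasDerivAt a a' x) (hb : HasDerivAt b b' x) :
    HasDerivAt (fun x => dot (a x) (b x)) (dot a' (b x) + dot (a x) b') x := by
  have h := ((hd_fst ha).mul (hd_fst hb)).add ((hd_snd ha).mul (hd_snd hb))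
  simp only [dot]
  exact h.congr_deriv (by ring)

private lemma slice_u {E : Type*} [NormedAddCommGroup E] [NormedSpace ℝ E]
    {f : ℝ × ℝ → E} {u t : ℝ} (hf : DifferentiableAt ℝ f (u, t)) :
    HasDerivAt (fun u' => f (u', t)) (fderiv ℝ f (u, t) (1, 0)) u := by
  have hcurve : HasDerivAt (fun u' : ℝ => ((u', t) : ℝ × ℝ)) ((1 : ℝ), (0 : ℝ)) u :=
    (hasDerivAt_id u).prodMk (hasDerivAt_const u t)
  exact hf.hasFDerivAt.comp_hasDerivAt u hcurve

private lemma slice_t {E : Type*} [NormedAddCommGroup E] [NormedSpace ℝ E]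
    {f : ℝ × ℝ → E} {u t : ℝ} (hf : DifferentiableAt ℝ f (u, t)) :
    HasDerivAt (fun t' => f (u, t')) (fderiv ℝ f (u, t) (0, 1)) t := by
  have hcurve : HasDerivAt (fun t' : ℝ => ((u, t') : ℝ × ℝ)) ((0 : ℝ), (1 : ℝ)) t :=
    (hasDerivAt_const t u).prodMk (hasDerivAt_id t)
  exact hf.hasFDerivAt.comp_hasDerivAt t hcurve

/-- Evolution of the angle function: `∂ᵤΘ = ℓ` and `β ∂ₜΘ = Tℓ - ∂ᵤN`. -/
theorem angle_evolution
    (X ν μ : ℝ → ℝ → ℝ × ℝ) (Θ ℓ β N T : ℝ → ℝ → ℝ)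
    (hXsm : ContDiffOn ℝ (⊤ : ℕ∞) (fun p : ℝ × ℝ => X p.1 p.2) {p : ℝ × ℝ | 0 < p.2})
    (hνsm : ContDiffOn ℝ (⊤ : ℕ∞) (fun p : ℝ × ℝ => ν p.1 p.2) {p : ℝ × ℝ | 0 < p.2})
    (hΘsm : ContDiffOn ℝ (⊤ : ℕ∞) (fun p : ℝ × ℝ => Θ p.1 p.2) {p : ℝ × ℝ | 0 < p.2})
    (hXper : ∀ u t, 0 < t → X (u + 2 * π) t = X u t)
    (hνΘ : ∀ u t, 0 < t → ν u t = (Real.sin (Θ u t), -Real.cos (Θ u t)))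
    (hLeg : ∀ u t, 0 < t → dot (deriv (fun u' => X u' t) u) (ν u t) = 0)
    (hμ : ∀ u t, μ u t = Jrot (ν u t))
    (hℓ : ∀ u t, ℓ u t = dot (deriv (fun u' => ν u' t) u) (μ u t))
    (hβ : ∀ u t, β u t = dot (deriv (fun u' => X u' t) u) (μ u t))
    (hN : ∀ u t, N u t = dot (deriv (fun t' => X u t') t) (ν u t))
    (hT : ∀ u t, T u t = dot (deriv (fun t' => X u t') t) (μ u t)) :
    ∀ u t, 0 < t →
      deriv (fun u' => Θ u' t) u = ℓ u t ∧
      β u t * deriv (fun t' => Θ u t') t = T u t * ℓ u t - deriv (fun u' => N u' t) u := by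
  intro u t ht
  set S : Set (ℝ × ℝ) := {p : ℝ × ℝ | 0 < p.2} with hS
  have hSopen : IsOpen S := isOpen_lt continuous_const continuous_snd
  set fX : ℝ × ℝ → ℝ × ℝ := fun p => X p.1 p.2 with hfX
  set fΘ : ℝ × ℝ → ℝ := fun p => Θ p.1 p.2 with hfΘ
  -- smoothness at points
  have hXc : ∀ p : ℝ × ℝ, 0 < p.2 → ContDiffAt ℝ (⊤ : ℕ∞) fX p := fun p hp =>
    hXsm.contDiffAt (hSopen.mem_nhds hp)
  have hΘc : ∀ p : ℝ × ℝ, 0 < p.2 → ContDiffAt ℝ (⊤ : ℕ∞) fΘ p := fun p hp =>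
    hΘsm.contDiffAt (hSopen.mem_nhds hp)
  have hXd : ∀ p : ℝ × ℝ, 0 < p.2 → DifferentiableAt ℝ fX p := fun p hp =>
    (hXc p hp).differentiableAt (by simp)
  have hΘd : ∀ p : ℝ × ℝ, 0 < p.2 → DifferentiableAt ℝ fΘ p := fun p hp =>
    (hΘc p hp).differentiableAt (by simp)
  -- partial derivatives of Θ
  set Θu : ℝ := fderiv ℝ fΘ (u, t) (1, 0) with hΘu_def
  set Θt : ℝ := fderiv ℝ fΘ (u, t) (0, 1) with hΘt_def
  have hΘu : HasDerivAt (fun u' => Θ u' t) Θu u := slice_u (hΘd (u, t) ht)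
  have hΘt : HasDerivAt (fun t' => Θ u t') Θt t := slice_t (hΘd (u, t) ht)
  set c : ℝ := Real.cos (Θ u t) with hc
  set s : ℝ := Real.sin (Θ u t) with hs
  -- derivative of ν in u
  have hνu : HasDerivAt (fun u' => ν u' t) (c * Θu, s * Θu) u := by
    have h1 : HasDerivAt (fun u' => Real.sin (Θ u' t)) (c * Θu) u :=
      by have := (Real.hasDerivAt_sin (Θ u t)).comp u hΘu; exact this
    have h2 : HasDerivAt (fun u' => -Real.cos (Θ u' t)) (s * Θu) u := by
      have := ((Real.hasDerivAt_cos (Θ u t)).comp u hΘu).neg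
      exact this.congr_deriv (by rw [hs]; ring)
    have h := h1.prodMk h2
    apply h.congr_of_eventuallyEq
    filter_upwards with u'
    rw [hνΘ u' t ht]
  -- derivative of ν in t
  have hνt : HasDerivAt (fun t' => ν u t') (c * Θt, s * Θt) t := by
    have h1 : HasDerivAt (fun t' => Real.sin (Θ u t')) (c * Θt) t :=
      by have := (Real.hasDerivAt_sin (Θ u t)).comp t hΘt; exact this
    have h2 : HasDerivAt (fun t' => -Real.cos (Θ u t')) (s * Θt) t := by
      have := ((Real.hasDerivAt_cos (Θ u t)).comp t hΘt).neg
      exact this.congr_deriv (by rw [hs]; ring)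
    have h := h1.prodMk h2
    apply h.congr_of_eventuallyEq
    filter_upwards [eventually_gt_nhds ht] with t' ht'
    rw [hνΘ u t' ht']
  have hνut : ν u t = (s, -c) := by rw [hνΘ u t ht]
  have hμut : μ u t = (c, s) := by rw [hμ, hνut]; simp [Jrot]
  -- Part 1
  have hℓeq : ℓ u t = Θu := by
    rw [hℓ, hνu.deriv, hμut]
    have hsc : s ^ 2 + c ^ 2 = 1 := sin_sq_add_cos_sq (Θ u t)
    simp only [dot]
    linear_combination Θu * hsc
  have part1 : deriv (fun u' => Θ u' t) u = ℓ u t := by rw [hΘu.deriv, hℓeq]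
  refine ⟨part1, ?_⟩
  -- second derivative machinery
  have hfd : ContDiffAt ℝ (⊤ : ℕ∞) (fderiv ℝ fX) (u, t) :=
    (hXc (u, t) ht).fderiv_right (by simp)
  have hfdd : DifferentiableAt ℝ (fderiv ℝ fX) (u, t) := hfd.differentiableAt (by simp)
  set D2 := fderiv ℝ (fderiv ℝ fX) (u, t) with hD2
  have hsymm : IsSymmSndFDerivAt ℝ fX (u, t) :=
    (hXc (u, t) ht).isSymmSndFDerivAt (by simp; exact WithTop.coe_le_coe.mpr (le_top : (2:ℕ∞) ≤ ⊤))
  -- derivative of u' ↦ ∂ₜX(u',t) in u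
  have hG : HasDerivAt (fun u' => fderiv ℝ fX (u', t) ((0 : ℝ), (1 : ℝ)))
      (D2 (1, 0) (0, 1)) u := by
    have h0 : HasDerivAt (fun u' => fderiv ℝ fX (u', t)) (D2 (1, 0)) u := slice_u hfdd
    exact (ContinuousLinearMap.apply ℝ (ℝ × ℝ) ((0 : ℝ), (1 : ℝ))).hasFDerivAt.comp_hasDerivAt u h0
  -- derivative of t' ↦ ∂ᵤX(u,t') in t
  have hH : HasDerivAt (fun t' => fderiv ℝ fX (u, t') ((1 : ℝ), (0 : ℝ)))
      (D2 (0, 1) (1, 0)) t := by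
    have h0 : HasDerivAt (fun t' => fderiv ℝ fX (u, t')) (D2 (0, 1)) t := slice_t hfdd
    exact (ContinuousLinearMap.apply ℝ (ℝ × ℝ) ((1 : ℝ), (0 : ℝ))).hasFDerivAt.comp_hasDerivAt t h0
  set Xu : ℝ × ℝ := fderiv ℝ fX (u, t) (1, 0) with hXu_def
  set G : ℝ × ℝ := fderiv ℝ fX (u, t) (0, 1) with hG_def
  set W : ℝ × ℝ := D2 (0, 1) (1, 0) with hW
  -- deriv (fun u' => X u' t) u = Xu and similarly in t
  have hXslice_u : ∀ u' : ℝ, deriv (fun u'' => X u'' t) u' = fderiv ℝ fX (u', t) (1, 0) :=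
    fun u' => (slice_u (hXd (u', t) ht)).deriv
  have hXslice_t : ∀ u' : ℝ, deriv (fun t' => X u' t') t = fderiv ℝ fX (u', t) (0, 1) :=
    fun u' => (slice_t (hXd (u', t) ht)).deriv
  -- differentiating the Legendre condition in t
  have hLegDeriv : dot W (ν u t) + dot Xu (c * Θt, s * Θt) = 0 := by
    have hphi : HasDerivAt (fun t' => dot (fderiv ℝ fX (u, t') ((1:ℝ),(0:ℝ))) (ν u t'))
        (dot W (ν u t) + dot Xu (c * Θt, s * Θt)) t := hd_dot hH hνt
    have hzero : (fun t' => dot (fderiv ℝ fX (u, t') ((1:ℝ),(0:ℝ))) (ν u t'))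
        =ᶠ[nhds t] fun _ => (0 : ℝ) := by
      filter_upwards [eventually_gt_nhds ht] with t' ht'
      have := (slice_u (hXd (u, t') ht')).deriv
      rw [← this, hLeg u t' ht']
    have h2 : HasDerivAt (fun _ : ℝ => (0 : ℝ))
        (dot W (ν u t) + dot Xu (c * Θt, s * Θt)) t :=
      hzero.symm.hasDerivAt_iff.mpr hphi
    have := h2.deriv
    simpa using this.symm
  -- derivative of N in u
  have hNder : deriv (fun u' => N u' t) u = dot W (ν u t) + dot G (c * Θu, s * Θu) := by
    have hNd : HasDerivAt (fun u' => dot (fderiv ℝ fX (u', t) ((0:ℝ),(1:ℝ))) (ν u' t))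
        (dot (D2 (1, 0) (0, 1)) (ν u t) + dot G (c * Θu, s * Θu)) u := hd_dot hG hνu
    have heq : (fun u' => N u' t)
        = fun u' => dot (fderiv ℝ fX (u', t) ((0:ℝ),(1:ℝ))) (ν u' t) := by
      funext u'
      rw [hN, hXslice_t]
    rw [heq, hNd.deriv, hsymm (1, 0) (0, 1)]
  -- assemble
  have hβeq : β u t = dot Xu (c, s) := by rw [hβ, hXslice_u, hμut]
  have hTeq : T u t = dot G (c, s) := by rw [hT, hXslice_t, hμut]
  rw [hΘt.deriv, hNder, hℓeq, hβeq, hTeq]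
  have h1 : dot Xu (c * Θt, s * Θt) = Θt * dot Xu (c, s) := by simp [dot]; ring
  have h2 : dot G (c * Θu, s * Θu) = Θu * dot G (c, s) := by simp [dot]; ring
  have h3 : dot W (ν u t) = -(Θt * dot Xu (c, s)) := by linarith [hLegDeriv, h1.symm ▸ hLegDeriv]
  rw [h3, h2]
  ring
end

section
/- Let (X, ν) be a smooth family of Legendre curves with Legendre curvature (ℓ, β), normal velocity N and tangent velocity T. Then β² ∂ₜℓ = β ∂ᵤ(Tℓ - ∂ᵤN) - (∂ᵤβ)(Tℓ - ∂ᵤN). In particular, at points where β ≠ 0, ∂ₜℓ = ∂ᵤ((Tℓ - ∂ᵤN)/β). -/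
open Real

/-! ### Toolkit: partial derivatives on `ℝ × ℝ` -/

noncomputable def Pd (v : ℝ × ℝ) (F : ℝ × ℝ → ℝ) (p : ℝ × ℝ) : ℝ := fderiv ℝ F p v

theorem hasDerivAt_slice_u {E : Type*} [NormedAddCommGroup E] [NormedSpace ℝ E]
    {F : ℝ × ℝ → E} {p : ℝ × ℝ} (h : DifferentiableAt ℝ F p) :
    HasDerivAt (fun u => F (u, p.2)) (fderiv ℝ F p (1, 0)) p.1 := by
  have h1 : HasDerivAt (fun u : ℝ => (u, p.2)) ((1 : ℝ), (0 : ℝ)) p.1 :=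
    HasDerivAt.prodMk (hasDerivAt_id p.1) (hasDerivAt_const _ _)
  have := h.hasFDerivAt.comp_hasDerivAt (x := p.1) (by simpa using h1)
  simpa [Function.comp_def] using this

theorem hasDerivAt_slice_t {E : Type*} [NormedAddCommGroup E] [NormedSpace ℝ E]
    {F : ℝ × ℝ → E} {p : ℝ × ℝ} (h : DifferentiableAt ℝ F p) :
    HasDerivAt (fun t => F (p.1, t)) (fderiv ℝ F p (0, 1)) p.2 := by
  have h1 : HasDerivAt (fun t : ℝ => (p.1, t)) ((0 : ℝ), (1 : ℝ)) p.2 :=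
    HasDerivAt.prodMk (hasDerivAt_const _ _) (hasDerivAt_id p.2)
  have := h.hasFDerivAt.comp_hasDerivAt (x := p.2) (by simpa using h1)
  simpa [Function.comp_def] using this

theorem contDiffOn_Pd {F : ℝ × ℝ → ℝ} {s : Set (ℝ × ℝ)} (hs : IsOpen s)
    (h : ContDiffOn ℝ (⊤ : ℕ∞) F s) (v : ℝ × ℝ) : ContDiffOn ℝ (⊤ : ℕ∞) (Pd v F) s := by
  have h1 : ContDiffOn ℝ (⊤ : ℕ∞) (fun p => fderiv ℝ F p) s := h.fderiv_of_isOpen hs (by simp)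
  exact (ContinuousLinearMap.apply ℝ ℝ v).contDiff.comp_contDiffOn h1

theorem Pd_comm {F : ℝ × ℝ → ℝ} {s : Set (ℝ × ℝ)} (hs : IsOpen s)
    (h : ContDiffOn ℝ (⊤ : ℕ∞) F s) {p : ℝ × ℝ} (hp : p ∈ s) (v w : ℝ × ℝ) :
    Pd v (Pd w F) p = Pd w (Pd v F) p := by
  have hdf : ContDiffOn ℝ (⊤ : ℕ∞) (fun q => fderiv ℝ F q) s := h.fderiv_of_isOpen hs (by simp)
  have hfd : HasFDerivAt (fderiv ℝ F) (fderiv ℝ (fderiv ℝ F) p) p :=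
    ((hdf.differentiableOn (by simp)).differentiableAt (hs.mem_nhds hp)).hasFDerivAt
  have hf : ∀ᶠ q in nhds p, HasFDerivAt F (fderiv ℝ F q) q := by
    filter_upwards [hs.mem_nhds hp] with q hq
    exact ((h.differentiableOn (by simp)).differentiableAt (hs.mem_nhds hq)).hasFDerivAt
  have hsym := second_derivative_symmetric_of_eventually hf hfd
  have key : ∀ z z' : ℝ × ℝ, Pd z (Pd z' F) p = fderiv ℝ (fderiv ℝ F) p z z' := by
    intro z z'
    have comp : HasFDerivAt (Pd z' F)
        ((ContinuousLinearMap.apply ℝ ℝ z').comp (fderiv ℝ (fderiv ℝ F) p)) p :=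
      (ContinuousLinearMap.apply ℝ ℝ z').hasFDerivAt.comp p hfd
    have := comp.fderiv
    simp only [Pd, this, ContinuousLinearMap.coe_comp', Function.comp_apply,
      ContinuousLinearMap.apply_apply]
  rw [key v w, key w v, hsym v w]

theorem Pd_congr {F G : ℝ × ℝ → ℝ} {p : ℝ × ℝ} (h : F =ᶠ[nhds p] G) (v : ℝ × ℝ) :
    Pd v F p = Pd v G p := by unfold Pd; rw [h.fderiv_eq]

theorem Pd_mul {F G : ℝ × ℝ → ℝ} {p : ℝ × ℝ} (hF : DifferentiableAt ℝ F p)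
    (hG : DifferentiableAt ℝ G p) (v : ℝ × ℝ) :
    Pd v (fun q => F q * G q) p = Pd v F p * G p + F p * Pd v G p := by
  unfold Pd; rw [fderiv_fun_mul hF hG]; simp; ring

theorem Pd_add {F G : ℝ × ℝ → ℝ} {p : ℝ × ℝ} (hF : DifferentiableAt ℝ F p)
    (hG : DifferentiableAt ℝ G p) (v : ℝ × ℝ) :
    Pd v (fun q => F q + G q) p = Pd v F p + Pd v G p := by
  unfold Pd; rw [fderiv_fun_add hF hG]; simp

theorem Pd_neg {F : ℝ × ℝ → ℝ} {p : ℝ × ℝ} (v : ℝ × ℝ) :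
    Pd v (fun q => -F q) p = -Pd v F p := by
  unfold Pd; rw [fderiv_fun_neg]; simp

theorem Pd_const {p : ℝ × ℝ} (c : ℝ) (v : ℝ × ℝ) : Pd v (fun _ => c) p = 0 := by
  unfold Pd; rw [fderiv_fun_const]; simp

/-- Decomposition in the orthonormal basis `(n, Jn)`. -/
theorem basis_decomp {a b n1 n2 c d : ℝ} (hu : n1 ^ 2 + n2 ^ 2 = 1)
    (h1 : a * n1 + b * n2 = c) (h2 : a * (-n2) + b * n1 = d) :
    a = c * n1 - d * n2 ∧ b = c * n2 + d * n1 :=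
  ⟨by linear_combination n1 * h1 - n2 * h2 - a * hu,
   by linear_combination n2 * h1 + n1 * h2 - b * hu⟩

/-- Evolution of `ℓ`: `β² ∂ₜℓ = β ∂ᵤ(Tℓ - ∂ᵤN) - (∂ᵤβ)(Tℓ - ∂ᵤN)`, and where `β ≠ 0`,
`∂ₜℓ = ∂ᵤ((Tℓ - ∂ᵤN)/β)`. -/
theorem ell_evolution
    (X ν μ : ℝ → ℝ → ℝ × ℝ) (ℓ β N T : ℝ → ℝ → ℝ)
    (hXsm : ContDiffOn ℝ (⊤ : ℕ∞) (fun p : ℝ × ℝ => X p.1 p.2) {p : ℝ × ℝ | 0 < p.2})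
    (hνsm : ContDiffOn ℝ (⊤ : ℕ∞) (fun p : ℝ × ℝ => ν p.1 p.2) {p : ℝ × ℝ | 0 < p.2})
    (hXper : ∀ u t, 0 < t → X (u + 2 * π) t = X u t)
    (hνper : ∀ u t, 0 < t → ν (u + 2 * π) t = ν u t)
    (hunit : ∀ u t, 0 < t → dot (ν u t) (ν u t) = 1)
    (hLeg : ∀ u t, 0 < t → dot (deriv (fun u' => X u' t) u) (ν u t) = 0)
    (hμ : ∀ u t, μ u t = Jrot (ν u t))
    (hℓ : ∀ u t, ℓ u t = dot (deriv (fun u' => ν u' t) u) (μ u t))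
    (hβ : ∀ u t, β u t = dot (deriv (fun u' => X u' t) u) (μ u t))
    (hN : ∀ u t, N u t = dot (deriv (fun t' => X u t') t) (ν u t))
    (hT : ∀ u t, T u t = dot (deriv (fun t' => X u t') t) (μ u t)) :
    ∀ u t, 0 < t →
      ((β u t) ^ 2 * deriv (fun t' => ℓ u t') t
        = β u t * deriv (fun u' => T u' t * ℓ u' t - deriv (fun u'' => N u'' t) u') u
          - deriv (fun u' => β u' t) u * (T u t * ℓ u t - deriv (fun u' => N u' t) u)) ∧
      (β u t ≠ 0 →
        deriv (fun t' => ℓ u t') t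
          = deriv (fun u' => (T u' t * ℓ u' t - deriv (fun u'' => N u'' t) u') / β u' t) u) := by
  intro u t ht
  set s : Set (ℝ × ℝ) := {p : ℝ × ℝ | 0 < p.2} with hsdef
  have hs : IsOpen s := isOpen_lt continuous_const continuous_snd
  -- component functions
  set X1 : ℝ × ℝ → ℝ := fun p => (X p.1 p.2).1 with hX1def
  set X2 : ℝ × ℝ → ℝ := fun p => (X p.1 p.2).2 with hX2def
  set V1 : ℝ × ℝ → ℝ := fun p => (ν p.1 p.2).1 with hV1def
  set V2 : ℝ × ℝ → ℝ := fun p => (ν p.1 p.2).2 with hV2def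
  have hX1sm : ContDiffOn ℝ (⊤ : ℕ∞) X1 s := hXsm.fst
  have hX2sm : ContDiffOn ℝ (⊤ : ℕ∞) X2 s := hXsm.snd
  have hV1sm : ContDiffOn ℝ (⊤ : ℕ∞) V1 s := hνsm.fst
  have hV2sm : ContDiffOn ℝ (⊤ : ℕ∞) V2 s := hνsm.snd
  -- geometric quantities as functions on ℝ × ℝ
  set B : ℝ × ℝ → ℝ := fun p => Pd (1, 0) X1 p * (-V2 p) + Pd (1, 0) X2 p * V1 p with hBdef
  set L : ℝ × ℝ → ℝ := fun p => Pd (1, 0) V1 p * (-V2 p) + Pd (1, 0) V2 p * V1 p with hLdef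
  set A : ℝ × ℝ → ℝ := fun p => Pd (0, 1) V1 p * (-V2 p) + Pd (0, 1) V2 p * V1 p with hAdef
  set Nf : ℝ × ℝ → ℝ := fun p => Pd (0, 1) X1 p * V1 p + Pd (0, 1) X2 p * V2 p with hNfdef
  set Tf : ℝ × ℝ → ℝ := fun p => Pd (0, 1) X1 p * (-V2 p) + Pd (0, 1) X2 p * V1 p with hTfdef
  -- generic helpers
  have dAt : ∀ F : ℝ × ℝ → ℝ, ContDiffOn ℝ (⊤ : ℕ∞) F s → ∀ q ∈ s, DifferentiableAt ℝ F q :=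
    fun F hF q hq => (hF.differentiableOn (by simp)).differentiableAt (hs.mem_nhds hq)
  have sliceu : ∀ F : ℝ × ℝ → ℝ, ContDiffOn ℝ (⊤ : ℕ∞) F s → ∀ q ∈ s,
      HasDerivAt (fun u' => F (u', q.2)) (Pd (1, 0) F q) q.1 :=
    fun F hF q hq => hasDerivAt_slice_u (dAt F hF q hq)
  have slicet : ∀ F : ℝ × ℝ → ℝ, ContDiffOn ℝ (⊤ : ℕ∞) F s → ∀ q ∈ s,
      HasDerivAt (fun t' => F (q.1, t')) (Pd (0, 1) F q) q.2 :=
    fun F hF q hq => hasDerivAt_slice_t (dAt F hF q hq)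
  have evq : ∀ F G : ℝ × ℝ → ℝ, (∀ q ∈ s, F q = G q) → ∀ q ∈ s, F =ᶠ[nhds q] G :=
    fun F G h q hq => Filter.eventually_of_mem (hs.mem_nhds hq) h
  -- smoothness of the geometric quantities
  have hBsm : ContDiffOn ℝ (⊤ : ℕ∞) B s :=
    ((contDiffOn_Pd hs hX1sm _).mul hV2sm.neg).add ((contDiffOn_Pd hs hX2sm _).mul hV1sm)
  have hLsm : ContDiffOn ℝ (⊤ : ℕ∞) L s :=
    ((contDiffOn_Pd hs hV1sm _).mul hV2sm.neg).add ((contDiffOn_Pd hs hV2sm _).mul hV1sm)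
  have hAsm : ContDiffOn ℝ (⊤ : ℕ∞) A s :=
    ((contDiffOn_Pd hs hV1sm _).mul hV2sm.neg).add ((contDiffOn_Pd hs hV2sm _).mul hV1sm)
  have hNfsm : ContDiffOn ℝ (⊤ : ℕ∞) Nf s :=
    ((contDiffOn_Pd hs hX1sm _).mul hV1sm).add ((contDiffOn_Pd hs hX2sm _).mul hV2sm)
  have hTfsm : ContDiffOn ℝ (⊤ : ℕ∞) Tf s :=
    ((contDiffOn_Pd hs hX1sm _).mul hV2sm.neg).add ((contDiffOn_Pd hs hX2sm _).mul hV1sm)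
  -- membership
  have hmem : ∀ u' t' : ℝ, 0 < t' → ((u', t') : ℝ × ℝ) ∈ s := fun u' t' h => h
  -- unit normal
  have hu2 : ∀ q ∈ s, V1 q ^ 2 + V2 q ^ 2 = 1 := by
    intro q hq
    have h := hunit q.1 q.2 hq
    simp only [dot] at h
    simp only [hV1def, hV2def]
    linear_combination h
  -- pairing of slices
  have hfunu : ∀ (G : ℝ → ℝ → ℝ × ℝ) (G1 G2 : ℝ × ℝ → ℝ), G1 = (fun p => (G p.1 p.2).1) →
      G2 = (fun p => (G p.1 p.2).2) → ∀ t' : ℝ,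
      (fun u' => G u' t') = fun u' => (G1 (u', t'), G2 (u', t')) := by
    intro G G1 G2 h1 h2 t'
    funext u'
    rw [h1, h2]
  have hfunt : ∀ (G : ℝ → ℝ → ℝ × ℝ) (G1 G2 : ℝ × ℝ → ℝ), G1 = (fun p => (G p.1 p.2).1) →
      G2 = (fun p => (G p.1 p.2).2) → ∀ u' : ℝ,
      (fun t' => G u' t') = fun t' => (G1 (u', t'), G2 (u', t')) := by
    intro G G1 G2 h1 h2 u'
    funext t'
    rw [h1, h2]
  -- Legendre condition, componentwise
  have hLeg' : ∀ q ∈ s, Pd (1, 0) X1 q * V1 q + Pd (1, 0) X2 q * V2 q = 0 := by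
    intro q hq
    have h := hLeg q.1 q.2 hq
    rw [hfunu X X1 X2 hX1def hX2def q.2,
      (HasDerivAt.prodMk (sliceu X1 hX1sm q hq) (sliceu X2 hX2sm q hq)).deriv] at h
    simp only [dot] at h
    simp only [hV1def, hV2def]
    linear_combination h
  -- orthogonality from the unit condition
  have horth : ∀ v : ℝ × ℝ, ∀ q ∈ s, Pd v V1 q * V1 q + Pd v V2 q * V2 q = 0 := by
    intro v q hq
    have hev : (fun r => V1 r * V1 r + V2 r * V2 r) =ᶠ[nhds q] (fun _ => 1) :=
      evq _ _ (fun r hr => by linear_combination hu2 r hr) q hq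
    have h0 : Pd v (fun r => V1 r * V1 r + V2 r * V2 r) q = 0 := by
      rw [Pd_congr hev, Pd_const]
    rw [Pd_add ((dAt V1 hV1sm q hq).fun_mul (dAt V1 hV1sm q hq))
        ((dAt V2 hV2sm q hq).fun_mul (dAt V2 hV2sm q hq)),
      Pd_mul (dAt V1 hV1sm q hq) (dAt V1 hV1sm q hq),
      Pd_mul (dAt V2 hV2sm q hq) (dAt V2 hV2sm q hq)] at h0
    linear_combination h0 / 2
  -- identification of T, N, ℓ, β with the smooth functions Tf, Nf, L, B
  have hT' : ∀ q ∈ s, T q.1 q.2 = Tf q := by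
    intro q hq
    rw [hT, hμ, hfunt X X1 X2 hX1def hX2def q.1,
      (HasDerivAt.prodMk (slicet X1 hX1sm q hq) (slicet X2 hX2sm q hq)).deriv]
    simp only [dot, Jrot, hTfdef, hV1def, hV2def]
  have hN' : ∀ q ∈ s, N q.1 q.2 = Nf q := by
    intro q hq
    rw [hN, hfunt X X1 X2 hX1def hX2def q.1,
      (HasDerivAt.prodMk (slicet X1 hX1sm q hq) (slicet X2 hX2sm q hq)).deriv]
    simp only [dot, hNfdef, hV1def, hV2def]
  have hℓ' : ∀ q ∈ s, ℓ q.1 q.2 = L q := by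
    intro q hq
    rw [hℓ, hμ, hfunu ν V1 V2 hV1def hV2def q.2,
      (HasDerivAt.prodMk (sliceu V1 hV1sm q hq) (sliceu V2 hV2sm q hq)).deriv]
    simp only [dot, Jrot, hLdef, hV1def, hV2def]
  have hβ' : ∀ q ∈ s, β q.1 q.2 = B q := by
    intro q hq
    rw [hβ, hμ, hfunu X X1 X2 hX1def hX2def q.2,
      (HasDerivAt.prodMk (sliceu X1 hX1sm q hq) (sliceu X2 hX2sm q hq)).deriv]
    simp only [dot, Jrot, hBdef, hV1def, hV2def]
  -- componentwise first derivatives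
  have hLq : ∀ q : ℝ × ℝ, Pd (1, 0) V1 q * (-V2 q) + Pd (1, 0) V2 q * V1 q = L q := by
    intro q; simp only [hLdef]
  have hAq : ∀ q : ℝ × ℝ, Pd (0, 1) V1 q * (-V2 q) + Pd (0, 1) V2 q * V1 q = A q := by
    intro q; simp only [hAdef]
  have hBq : ∀ q : ℝ × ℝ, Pd (1, 0) X1 q * (-V2 q) + Pd (1, 0) X2 q * V1 q = B q := by
    intro q; simp only [hBdef]
  have hTq : ∀ q : ℝ × ℝ, Pd (0, 1) X1 q * (-V2 q) + Pd (0, 1) X2 q * V1 q = Tf q := by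
    intro q; simp only [hTfdef]
  have hNq : ∀ q : ℝ × ℝ, Pd (0, 1) X1 q * V1 q + Pd (0, 1) X2 q * V2 q = Nf q := by
    intro q; simp only [hNfdef]
  have hdV1u : ∀ q ∈ s, Pd (1, 0) V1 q = L q * (-V2 q) := by
    intro q hq
    have h := basis_decomp (hu2 q hq) (horth (1, 0) q hq) (hLq q)
    linear_combination h.1
  have hdV2u : ∀ q ∈ s, Pd (1, 0) V2 q = L q * V1 q := by
    intro q hq
    have h := basis_decomp (hu2 q hq) (horth (1, 0) q hq) (hLq q)
    linear_combination h.2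
  have hdV1t : ∀ q ∈ s, Pd (0, 1) V1 q = A q * (-V2 q) := by
    intro q hq
    have h := basis_decomp (hu2 q hq) (horth (0, 1) q hq) (hAq q)
    linear_combination h.1
  have hdV2t : ∀ q ∈ s, Pd (0, 1) V2 q = A q * V1 q := by
    intro q hq
    have h := basis_decomp (hu2 q hq) (horth (0, 1) q hq) (hAq q)
    linear_combination h.2
  have hdX1u : ∀ q ∈ s, Pd (1, 0) X1 q = B q * (-V2 q) := by
    intro q hq
    have h := basis_decomp (hu2 q hq) (hLeg' q hq) (hBq q)
    linear_combination h.1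
  have hdX2u : ∀ q ∈ s, Pd (1, 0) X2 q = B q * V1 q := by
    intro q hq
    have h := basis_decomp (hu2 q hq) (hLeg' q hq) (hBq q)
    linear_combination h.2
  have hdX1t : ∀ q ∈ s, Pd (0, 1) X1 q = Nf q * V1 q - Tf q * V2 q := by
    intro q hq
    have h := basis_decomp (hu2 q hq) (hNq q) (hTq q)
    linear_combination h.1
  have hdX2t : ∀ q ∈ s, Pd (0, 1) X2 q = Nf q * V2 q + Tf q * V1 q := by
    intro q hq
    have h := basis_decomp (hu2 q hq) (hNq q) (hTq q)
    linear_combination h.2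
  -- evolution of the angle: ∂ₜℓ = ∂ᵤ α  (E1)
  have hE1 : ∀ q ∈ s, Pd (0, 1) L q = Pd (1, 0) A q := by
    intro q hq
    have dV1 := dAt V1 hV1sm q hq
    have dV2 := dAt V2 hV2sm q hq
    have dA := dAt A hAsm q hq
    have dPV1u : DifferentiableAt ℝ (Pd (1, 0) V1) q := dAt _ (contDiffOn_Pd hs hV1sm _) q hq
    have dPV2u : DifferentiableAt ℝ (Pd (1, 0) V2) q := dAt _ (contDiffOn_Pd hs hV2sm _) q hq
    have step1 : Pd (0, 1) L q
        = Pd (0, 1) (Pd (1, 0) V1) q * (-V2 q) + Pd (1, 0) V1 q * (-Pd (0, 1) V2 q)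
          + (Pd (0, 1) (Pd (1, 0) V2) q * V1 q + Pd (1, 0) V2 q * Pd (0, 1) V1 q) := by
      conv_lhs => rw [hLdef]
      rw [Pd_add (dPV1u.fun_mul dV2.fun_neg) (dPV2u.fun_mul dV1), Pd_mul dPV1u dV2.fun_neg,
        Pd_mul dPV2u dV1, Pd_neg]
    have c1 : Pd (0, 1) (Pd (1, 0) V1) q
        = Pd (1, 0) A q * (-V2 q) + A q * (-(L q * V1 q)) := by
      rw [Pd_comm hs hV1sm hq, Pd_congr (evq _ _ hdV1t q hq), Pd_mul dA dV2.fun_neg, Pd_neg,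
        hdV2u q hq]
    have c2 : Pd (0, 1) (Pd (1, 0) V2) q
        = Pd (1, 0) A q * V1 q + A q * (L q * (-V2 q)) := by
      rw [Pd_comm hs hV2sm hq, Pd_congr (evq _ _ hdV2t q hq), Pd_mul dA dV1, hdV1u q hq]
    rw [step1, c1, c2, hdV1u q hq, hdV2u q hq, hdV1t q hq, hdV2t q hq]
    linear_combination Pd (1, 0) A q * hu2 q hq
  -- the compatibility relation: βα = Tℓ - ∂ᵤN  (E2)
  have hE2 : ∀ q ∈ s, Tf q * L q - Pd (1, 0) Nf q = B q * A q := by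
    intro q hq
    have dV1 := dAt V1 hV1sm q hq
    have dV2 := dAt V2 hV2sm q hq
    have dB := dAt B hBsm q hq
    have dPX1t : DifferentiableAt ℝ (Pd (0, 1) X1) q := dAt _ (contDiffOn_Pd hs hX1sm _) q hq
    have dPX2t : DifferentiableAt ℝ (Pd (0, 1) X2) q := dAt _ (contDiffOn_Pd hs hX2sm _) q hq
    have step1 : Pd (1, 0) Nf q
        = Pd (1, 0) (Pd (0, 1) X1) q * V1 q + Pd (0, 1) X1 q * Pd (1, 0) V1 q
          + (Pd (1, 0) (Pd (0, 1) X2) q * V2 q + Pd (0, 1) X2 q * Pd (1, 0) V2 q) := by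
      conv_lhs => rw [hNfdef]
      rw [Pd_add (dPX1t.fun_mul dV1) (dPX2t.fun_mul dV2), Pd_mul dPX1t dV1, Pd_mul dPX2t dV2]
    have c1 : Pd (1, 0) (Pd (0, 1) X1) q
        = Pd (0, 1) B q * (-V2 q) + B q * (-(A q * V1 q)) := by
      rw [Pd_comm hs hX1sm hq, Pd_congr (evq _ _ hdX1u q hq), Pd_mul dB dV2.fun_neg, Pd_neg,
        hdV2t q hq]
    have c2 : Pd (1, 0) (Pd (0, 1) X2) q
        = Pd (0, 1) B q * V1 q + B q * (A q * (-V2 q)) := by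
      rw [Pd_comm hs hX2sm hq, Pd_congr (evq _ _ hdX2u q hq), Pd_mul dB dV1, hdV1t q hq]
    rw [step1, c1, c2, hdV1u q hq, hdV2u q hq, hdX1t q hq, hdX2t q hq]
    linear_combination (B q * A q - Tf q * L q) * hu2 q hq
  -- clean-typed slice lemmas
  have sliceu' : ∀ F : ℝ × ℝ → ℝ, ContDiffOn ℝ (⊤ : ℕ∞) F s → ∀ u' t' : ℝ, 0 < t' →
      HasDerivAt (fun a => F (a, t')) (Pd (1, 0) F (u', t')) u' :=
    fun F hF u' t' h => sliceu F hF (u', t') (hmem u' t' h)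
  have slicet' : ∀ F : ℝ × ℝ → ℝ, ContDiffOn ℝ (⊤ : ℕ∞) F s → ∀ u' t' : ℝ, 0 < t' →
      HasDerivAt (fun a => F (u', a)) (Pd (0, 1) F (u', t')) t' :=
    fun F hF u' t' h => slicet F hF (u', t') (hmem u' t' h)
  -- pointwise identifications along the time slice t
  have hTp : ∀ u' : ℝ, T u' t = Tf (u', t) := fun u' => hT' (u', t) (hmem u' t ht)
  have hℓp : ∀ u' : ℝ, ℓ u' t = L (u', t) := fun u' => hℓ' (u', t) (hmem u' t ht)
  have hβp : ∀ u' : ℝ, β u' t = B (u', t) := fun u' => hβ' (u', t) (hmem u' t ht)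
  have hNfun : (fun u'' => N u'' t) = fun u'' => Nf (u'', t) :=
    funext fun u'' => hN' (u'', t) (hmem u'' t ht)
  -- the key function identity:  Tℓ - ∂ᵤN = βα
  have hTLA : (fun u' => T u' t * ℓ u' t - deriv (fun u'' => N u'' t) u')
      = fun u' => B (u', t) * A (u', t) := by
    funext u'
    rw [hNfun, (sliceu' Nf hNfsm u' t ht).deriv, hTp u', hℓp u']
    exact hE2 (u', t) (hmem u' t ht)
  -- the four derivative computations appearing in the statement
  have hder1 : deriv (fun u' => T u' t * ℓ u' t - deriv (fun u'' => N u'' t) u') u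
      = Pd (1, 0) B (u, t) * A (u, t) + B (u, t) * Pd (1, 0) A (u, t) := by
    rw [hTLA]
    exact ((sliceu' B hBsm u t ht).mul (sliceu' A hAsm u t ht)).deriv
  have hder2 : deriv (fun u' => β u' t) u = Pd (1, 0) B (u, t) := by
    rw [funext hβp]
    exact (sliceu' B hBsm u t ht).deriv
  have hder3 : deriv (fun u' => N u' t) u = Pd (1, 0) Nf (u, t) := by
    rw [hNfun]
    exact (sliceu' Nf hNfsm u t ht).deriv
  have hder4 : deriv (fun t' => ℓ u t') t = Pd (0, 1) L (u, t) := by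
    have hev : (fun t' => ℓ u t') =ᶠ[nhds t] fun t' => L (u, t') := by
      filter_upwards [eventually_gt_nhds ht] with t' ht'
      exact hℓ' (u, t') (hmem u t' ht')
    rw [hev.deriv_eq]
    exact (slicet' L hLsm u t ht).deriv
  have e1 := hE1 (u, t) (hmem u t ht)
  have e2 := hE2 (u, t) (hmem u t ht)
  have hβB : β u t = B (u, t) := hβp u
  constructor
  · rw [hder1, hder2, hder3, hder4, hβB, hTp u, hℓp u, e1, e2]
    ring
  · intro hβ0
    have hB0 : B (u, t) ≠ 0 := by rwa [hβB] at hβ0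
    have hfun2 : (fun u' => (T u' t * ℓ u' t - deriv (fun u'' => N u'' t) u') / β u' t)
        = fun u' => B (u', t) * A (u', t) / B (u', t) := by
      funext u'
      rw [congrFun hTLA u', hβp u']
    have hdiv := ((sliceu' B hBsm u t ht).fun_mul (sliceu' A hAsm u t ht)).fun_div
      (sliceu' B hBsm u t ht) hB0
    rw [hder4, hfun2, hdiv.deriv, e1]
    field_simp
    ring
end

section
/- Let n, m ∈ ℕ with n ≥ 1, m ≠ n, and C₁, C₂ ∈ ℝ. Define λ*(t) = e^{(1 - m²/n²)t}, ν*(u) = (sin(nu), -cos(nu)), and X*(u) = C₁ · ( (n/(n²-m²)) sin(nu)cos(mu) - (m/(n²-m²)) cos(nu)sin(mu), -(n/(n²-m²)) cos(nu)cos(mu) - (m/(n²-m²)) sin(nu)sin(mu) ) + C₂ · ( (n/(n²-m²)) sin(nu)sin(mu) + (m/(n²-m²)) cos(nu)cos(mu), -(n/(n²-m²)) cos(nu)sin(mu) + (m/(n²-m²)) sin(nu)cos(mu) ). Then (X*, ν*) is a Legendre curve (⟨∂ᵤX*, ν*⟩ = 0) whose Legendre curvature is ℓ*(u) = n and β*(u)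 = C₁ cos(mu) + C₂ sin(mu). -/
open Real

private lemma hasDerivAt_sin_mul (c u : ℝ) :
    HasDerivAt (fun x : ℝ => Real.sin (c * x)) (c * Real.cos (c * u)) u := by
  simpa [mul_comm, Function.comp_def] using (Real.hasDerivAt_sin (c * u)).comp u ((hasDerivAt_id u).const_mul c)

private lemma hasDerivAt_cos_mul (c u : ℝ) :
    HasDerivAt (fun x : ℝ => Real.cos (c * x)) (-(c * Real.sin (c * u))) u := by
  simpa [mul_comm, Function.comp_def] using (Real.hasDerivAt_cos (c * u)).comp u ((hasDerivAt_id u).const_mul c)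

private lemma hasDerivAt_trig (a b c d N M u : ℝ) :
    HasDerivAt (fun x : ℝ => a * Real.sin (N * x) * Real.cos (M * x)
        + b * Real.cos (N * x) * Real.sin (M * x)
        + c * Real.sin (N * x) * Real.sin (M * x)
        + d * Real.cos (N * x) * Real.cos (M * x))
      (a * (N * Real.cos (N * u) * Real.cos (M * u) - M * Real.sin (N * u) * Real.sin (M * u))
        + b * (M * Real.cos (N * u) * Real.cos (M * u) - N * Real.sin (N * u) * Real.sin (M * u))
        + c * (N * Real.cos (N * u) * Real.sin (M * u) + M * Real.sin (N * u) * Real.cos (M * u))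
        + d * (-(N * Real.sin (N * u) * Real.cos (M * u)) - M * Real.cos (N * u) * Real.sin (M * u))) u := by
  have h := (((((hasDerivAt_sin_mul N u).const_mul a).mul (hasDerivAt_cos_mul M u)).add
      (((hasDerivAt_cos_mul N u).const_mul b).mul (hasDerivAt_sin_mul M u))).add
      (((hasDerivAt_sin_mul N u).const_mul c).mul (hasDerivAt_sin_mul M u))).add
      (((hasDerivAt_cos_mul N u).const_mul d).mul (hasDerivAt_cos_mul M u))
  refine HasDerivAt.congr_deriv h ?_
  ring

/-- The self-similar profile `(X*, ν*)` is a Legendre curve with Legendre curvature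
`ℓ*(u) = n`, `β*(u) = C₁cos(mu) + C₂sin(mu)`. -/
theorem self_similar_profile_curvature
    (n m : ℕ) (hn : 1 ≤ n) (hmn : m ≠ n) (C₁ C₂ : ℝ)
    (Xs νs μs : ℝ → ℝ × ℝ)
    (hνs : ∀ u, νs u = (Real.sin (n * u), -Real.cos (n * u)))
    (hμs : ∀ u, μs u = (Real.cos (n * u), Real.sin (n * u)))
    (hXs : ∀ u, Xs u
      = C₁ • (((n : ℝ) / ((n : ℝ) ^ 2 - (m : ℝ) ^ 2)) * Real.sin (n * u) * Real.cos (m * u)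
                - ((m : ℝ) / ((n : ℝ) ^ 2 - (m : ℝ) ^ 2)) * Real.cos (n * u) * Real.sin (m * u),
              -((n : ℝ) / ((n : ℝ) ^ 2 - (m : ℝ) ^ 2)) * Real.cos (n * u) * Real.cos (m * u)
                - ((m : ℝ) / ((n : ℝ) ^ 2 - (m : ℝ) ^ 2)) * Real.sin (n * u) * Real.sin (m * u))
        + C₂ • (((n : ℝ) / ((n : ℝ) ^ 2 - (m : ℝ) ^ 2)) * Real.sin (n * u) * Real.sin (m * u)
                + ((m : ℝ) / ((n : ℝ) ^ 2 - (m : ℝ) ^ 2)) * Real.cos (n * u) * Real.cos (m * u),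
              -((n : ℝ) / ((n : ℝ) ^ 2 - (m : ℝ) ^ 2)) * Real.cos (n * u) * Real.sin (m * u)
                + ((m : ℝ) / ((n : ℝ) ^ 2 - (m : ℝ) ^ 2)) * Real.sin (n * u) * Real.cos (m * u))) :
    ∀ u : ℝ,
      dot (deriv Xs u) (νs u) = 0 ∧
      dot (deriv νs u) (μs u) = n ∧
      dot (deriv Xs u) (μs u) = C₁ * Real.cos (m * u) + C₂ * Real.sin (m * u) := by
  intro u
  have hk : (n : ℝ) ^ 2 - (m : ℝ) ^ 2 ≠ 0 := by
    have h1 : (m : ℝ) ≠ (n : ℝ) := by exact_mod_cast hmn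
    have h2 : (0 : ℝ) ≤ (m : ℝ) := by positivity
    have h3 : (0 : ℝ) ≤ (n : ℝ) := by positivity
    intro h
    rcases lt_or_gt_of_ne h1 with h' | h' <;> nlinarith
  set N : ℝ := (n : ℝ) with hN
  set M : ℝ := (m : ℝ) with hM
  set k : ℝ := N ^ 2 - M ^ 2 with hkdef
  -- rewrite Xs as a pair of trig combinations
  have hXfun : Xs = fun x : ℝ =>
      ((C₁ * (N / k)) * Real.sin (N * x) * Real.cos (M * x)
        + (-(C₁ * (M / k))) * Real.cos (N * x) * Real.sin (M * x)
        + (C₂ * (N / k)) * Real.sin (N * x) * Real.sin (M * x)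
        + (C₂ * (M / k)) * Real.cos (N * x) * Real.cos (M * x),
       (C₂ * (M / k)) * Real.sin (N * x) * Real.cos (M * x)
        + (-(C₂ * (N / k))) * Real.cos (N * x) * Real.sin (M * x)
        + (-(C₁ * (M / k))) * Real.sin (N * x) * Real.sin (M * x)
        + (-(C₁ * (N / k))) * Real.cos (N * x) * Real.cos (M * x)) := by
    funext x
    rw [hXs x]
    simp only [Prod.smul_mk, smul_eq_mul, Prod.mk_add_mk, Prod.mk.injEq]
    constructor <;> ring
  have hd1 := hasDerivAt_trig (C₁ * (N / k)) (-(C₁ * (M / k))) (C₂ * (N / k)) (C₂ * (M / k)) N M u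
  have hd2 := hasDerivAt_trig (C₂ * (M / k)) (-(C₂ * (N / k))) (-(C₁ * (M / k))) (-(C₁ * (N / k))) N M u
  have hX' : HasDerivAt Xs
      ((C₁ * Real.cos (M * u) + C₂ * Real.sin (M * u)) * Real.cos (N * u),
       (C₁ * Real.cos (M * u) + C₂ * Real.sin (M * u)) * Real.sin (N * u)) u := by
    rw [hXfun]
    refine HasDerivAt.congr_deriv (HasDerivAt.prodMk hd1 hd2) ?_
    have h1 : Real.sin (N * u) ^ 2 + Real.cos (N * u) ^ 2 = 1 := Real.sin_sq_add_cos_sq _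
    refine Prod.ext ?_ ?_ <;> simp only <;> field_simp <;> ring
  have hνfun : νs = fun x : ℝ => (Real.sin (N * x), -Real.cos (N * x)) := funext hνs
  have hν' : HasDerivAt νs (N * Real.cos (N * u), N * Real.sin (N * u)) u := by
    rw [hνfun]
    exact HasDerivAt.prodMk (hasDerivAt_sin_mul N u) (HasDerivAt.congr_deriv (HasDerivAt.neg (hasDerivAt_cos_mul N u)) (neg_neg _))
  rw [hX'.deriv, hν'.deriv, hνs u, hμs u]
  have hpy : Real.sin (N * u) ^ 2 + Real.cos (N * u) ^ 2 = 1 := Real.sin_sq_add_cos_sq _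
  refine ⟨?_, ?_, ?_⟩
  · simp only [dot]; ring
  · simp only [dot]; linear_combination N * hpy
  · simp only [dot]
    linear_combination (C₁ * Real.cos (M * u) + C₂ * Real.sin (M * u)) * hpy
end

section
/- Let n, m, C₁, C₂, λ*, X*, ν* be as in the classification of self-similar profiles (ℓ* ≡ n, β*(u) = C₁cos(mu) + C₂sin(mu), λ*(t) = e^{(1-m²/n²)t}, m ≠ n). Then the family X(u,t) := λ*(t) X*(u), ν(u,t) := ν*(u) satisfies the special inverse curvature flow equation ∂ₜX = (β/ℓ) ν + (∂ᵤβ/ℓ²) μ, where (ℓ, β)(u,t) = (n, λ*(t)β*(u)) is the Legendre curvature of (X, ν) and μ = Jν. -/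
set_option maxHeartbeats 1600000


open Real

private lemma hd_sin (c u : ℝ) :
    HasDerivAt (fun x => Real.sin (c * x)) (c * Real.cos (c * u)) u := by
  simpa [mul_comm, Function.comp_def] using
    (Real.hasDerivAt_sin (c * u)).comp u ((hasDerivAt_id u).const_mul c)

private lemma hd_cos (c u : ℝ) :
    HasDerivAt (fun x => Real.cos (c * x)) (-(c * Real.sin (c * u))) u := by
  simpa [mul_comm, Function.comp_def] using
    (Real.hasDerivAt_cos (c * u)).comp u ((hasDerivAt_id u).const_mul c)

/-- The family `X(u,t) = λ*(t)X*(u)`, `ν(u,t) = ν*(u)` is a self-similar solution of the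
special inverse curvature flow `∂ₜX = (β/ℓ)ν + (∂ᵤβ/ℓ²)μ`, with Legendre curvature
`(ℓ, β)(u,t) = (n, λ*(t)β*(u))`. -/
theorem self_similar_solves_flow
    (n m : ℕ) (hn : 1 ≤ n) (hmn : m ≠ n) (C₁ C₂ : ℝ)
    (lam βs : ℝ → ℝ) (Xs νs μs : ℝ → ℝ × ℝ)
    (hlam : ∀ t, lam t = Real.exp ((1 - (m : ℝ) ^ 2 / (n : ℝ) ^ 2) * t))
    (hβs : ∀ u, βs u = C₁ * Real.cos (m * u) + C₂ * Real.sin (m * u))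
    (hνs : ∀ u, νs u = (Real.sin (n * u), -Real.cos (n * u)))
    (hμs : ∀ u, μs u = (Real.cos (n * u), Real.sin (n * u)))
    (hXs : ∀ u, Xs u
      = C₁ • (((n : ℝ) / ((n : ℝ) ^ 2 - (m : ℝ) ^ 2)) * Real.sin (n * u) * Real.cos (m * u)
                - ((m : ℝ) / ((n : ℝ) ^ 2 - (m : ℝ) ^ 2)) * Real.cos (n * u) * Real.sin (m * u),
              -((n : ℝ) / ((n : ℝ) ^ 2 - (m : ℝ) ^ 2)) * Real.cos (n * u) * Real.cos (m * u)
                - ((m : ℝ) / ((n : ℝ) ^ 2 - (m : ℝ) ^ 2)) * Real.sin (n * u) * Real.sin (m * u))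
        + C₂ • (((n : ℝ) / ((n : ℝ) ^ 2 - (m : ℝ) ^ 2)) * Real.sin (n * u) * Real.sin (m * u)
                + ((m : ℝ) / ((n : ℝ) ^ 2 - (m : ℝ) ^ 2)) * Real.cos (n * u) * Real.cos (m * u),
              -((n : ℝ) / ((n : ℝ) ^ 2 - (m : ℝ) ^ 2)) * Real.cos (n * u) * Real.sin (m * u)
                + ((m : ℝ) / ((n : ℝ) ^ 2 - (m : ℝ) ^ 2)) * Real.sin (n * u) * Real.cos (m * u))) :
    ∀ u t : ℝ,
      -- (ℓ, β) is the Legendre curvature of (λ*X*, ν*)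
      (deriv (fun u' => lam t • Xs u') u = (lam t * βs u) • μs u) ∧
      (dot (deriv νs u) (μs u) = n) ∧
      -- the special inverse curvature flow equation
      (deriv (fun t' => lam t' • Xs u) t
        = ((lam t * βs u) / (n : ℝ)) • νs u
          + ((deriv (fun u' => lam t * βs u') u) / (n : ℝ) ^ 2) • μs u) := by
  intro u t
  have hn0 : (n : ℝ) ≠ 0 := by positivity
  have hnm : (n : ℝ) ^ 2 - (m : ℝ) ^ 2 ≠ 0 := by
    intro h
    have h2 : (n : ℝ) ^ 2 = (m : ℝ) ^ 2 := by linarith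
    have h3 : n ^ 2 = m ^ 2 := by exact_mod_cast h2
    exact hmn ((Nat.pow_left_injective (by norm_num) h3).symm)
  set A : ℝ := (n : ℝ) / ((n : ℝ) ^ 2 - (m : ℝ) ^ 2) with hA
  set B : ℝ := (m : ℝ) / ((n : ℝ) ^ 2 - (m : ℝ) ^ 2) with hB
  -- rewrite Xs as an explicit pair
  have hXfun : Xs = fun x =>
      (C₁ * (A * Real.sin (n * x) * Real.cos (m * x) - B * Real.cos (n * x) * Real.sin (m * x))
        + C₂ * (A * Real.sin (n * x) * Real.sin (m * x) + B * Real.cos (n * x) * Real.cos (m * x)),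
       C₁ * (-A * Real.cos (n * x) * Real.cos (m * x) - B * Real.sin (n * x) * Real.sin (m * x))
        + C₂ * (-A * Real.cos (n * x) * Real.sin (m * x) + B * Real.sin (n * x) * Real.cos (m * x))) := by
    funext x
    rw [hXs x]
    simp [Prod.smul_mk, Prod.mk_add_mk, smul_eq_mul]
  -- derivative of Xs at u
  have h1 : HasDerivAt (fun x =>
      C₁ * (A * Real.sin (n * x) * Real.cos (m * x) - B * Real.cos (n * x) * Real.sin (m * x))
        + C₂ * (A * Real.sin (n * x) * Real.sin (m * x) + B * Real.cos (n * x) * Real.cos (m * x)))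
      (C₁ * ((A * ((n:ℝ) * Real.cos (n*u)) * Real.cos (m*u) + A * Real.sin (n*u) * (-((m:ℝ) * Real.sin (m*u))))
          - (B * (-((n:ℝ) * Real.sin (n*u))) * Real.sin (m*u) + B * Real.cos (n*u) * ((m:ℝ) * Real.cos (m*u))))
        + C₂ * ((A * ((n:ℝ) * Real.cos (n*u)) * Real.sin (m*u) + A * Real.sin (n*u) * ((m:ℝ) * Real.cos (m*u)))
          + (B * (-((n:ℝ) * Real.sin (n*u))) * Real.cos (m*u) + B * Real.cos (n*u) * (-((m:ℝ) * Real.sin (m*u)))))) u := by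
    exact (((((hd_sin (n:ℝ) u).const_mul A).mul (hd_cos (m:ℝ) u)).sub
              (((hd_cos (n:ℝ) u).const_mul B).mul (hd_sin (m:ℝ) u))).const_mul C₁).add
          (((((hd_sin (n:ℝ) u).const_mul A).mul (hd_sin (m:ℝ) u)).add
              (((hd_cos (n:ℝ) u).const_mul B).mul (hd_cos (m:ℝ) u))).const_mul C₂)
  have h2 : HasDerivAt (fun x =>
      C₁ * (-A * Real.cos (n * x) * Real.cos (m * x) - B * Real.sin (n * x) * Real.sin (m * x))
        + C₂ * (-A * Real.cos (n * x) * Real.sin (m * x) + B * Real.sin (n * x) * Real.cos (m * x)))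
      (C₁ * ((-A * (-((n:ℝ) * Real.sin (n*u))) * Real.cos (m*u) + -A * Real.cos (n*u) * (-((m:ℝ) * Real.sin (m*u))))
          - (B * ((n:ℝ) * Real.cos (n*u)) * Real.sin (m*u) + B * Real.sin (n*u) * ((m:ℝ) * Real.cos (m*u))))
        + C₂ * ((-A * (-((n:ℝ) * Real.sin (n*u))) * Real.sin (m*u) + -A * Real.cos (n*u) * ((m:ℝ) * Real.cos (m*u)))
          + (B * ((n:ℝ) * Real.cos (n*u)) * Real.cos (m*u) + B * Real.sin (n*u) * (-((m:ℝ) * Real.sin (m*u)))))) u := by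
    exact (((((hd_cos (n:ℝ) u).const_mul (-A)).mul (hd_cos (m:ℝ) u)).sub
              (((hd_sin (n:ℝ) u).const_mul B).mul (hd_sin (m:ℝ) u))).const_mul C₁).add
          (((((hd_cos (n:ℝ) u).const_mul (-A)).mul (hd_sin (m:ℝ) u)).add
              (((hd_sin (n:ℝ) u).const_mul B).mul (hd_cos (m:ℝ) u))).const_mul C₂)
  refine ⟨?_, ?_, ?_⟩
  · -- ∂ᵤ(λ X*) = (λ β*) μ*
    simp only [hXfun]
    erw [(((h1.prodMk h2).const_smul (lam t)).deriv), hβs, hμs]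
    simp only [Prod.smul_mk, smul_eq_mul, Prod.mk.injEq]
    constructor <;> (rw [hA, hB]; field_simp; ring)
  · -- dot (ν*') μ* = n
    have hν : HasDerivAt νs ((n:ℝ) * Real.cos (n*u), -(-((n:ℝ) * Real.sin (n*u)))) u := by
      have : νs = fun x => (Real.sin (n*x), -Real.cos (n*x)) := funext hνs
      rw [this]; exact (hd_sin (n:ℝ) u).prodMk ((hd_cos (n:ℝ) u).neg)
    rw [hν.deriv, hμs, dot]
    simp only
    have := Real.sin_sq_add_cos_sq ((n:ℝ)*u)
    nlinarith [this]
  · -- the flow equation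
    have hc : HasDerivAt lam ((1 - (m : ℝ) ^ 2 / (n : ℝ) ^ 2) * lam t) t := by
      have : lam = fun s => Real.exp ((1 - (m : ℝ) ^ 2 / (n : ℝ) ^ 2) * s) := funext hlam
      rw [this]
      simpa [mul_comm] using
        ((hasDerivAt_id t).const_mul (1 - (m : ℝ) ^ 2 / (n : ℝ) ^ 2)).exp
    have hT : deriv (fun t' => lam t' • Xs u) t
        = ((1 - (m : ℝ) ^ 2 / (n : ℝ) ^ 2) * lam t) • Xs u := (hc.smul_const (Xs u)).deriv
    have hβd : HasDerivAt (fun u' => lam t * βs u')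
        (lam t * (C₁ * (-((m:ℝ) * Real.sin (m*u))) + C₂ * ((m:ℝ) * Real.cos (m*u)))) u := by
      have : (fun u' => lam t * βs u')
          = fun x => lam t * (C₁ * Real.cos (m*x) + C₂ * Real.sin (m*x)) := by
        funext x; rw [hβs]
      rw [this]
      exact (((hd_cos (m:ℝ) u).const_mul C₁).add ((hd_sin (m:ℝ) u).const_mul C₂)).const_mul (lam t)
    rw [hT, hβd.deriv, hXs u, hβs, hνs, hμs]
    simp only [Prod.smul_mk, Prod.mk_add_mk, smul_eq_mul, Prod.mk.injEq, smul_sub, smul_add,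
      smul_neg]
    constructor <;> (rw [hA, hB]; field_simp [hnm]; ring)
end

section
/- Let n, m ∈ ℕ with n ≥ 1, m ≠ n, let (a_k)_{k≥m}, (b_k)_{k≥m} be square-summable sequences with (a_m, b_m) ≠ (0,0), and define β(u,t) = Σ_{k=m}^∞ e^{(1-k²/n²)t}(a_k cos(ku) + b_k sin(ku)) and β̃(u,t) = e^{(1-m²/n²)t}(a_m cos(mu) + b_m sin(mu)). Then for every ε ∈ (0,1) and δ > 0 there exists M > 0 such that sup_u |β(u,t) - β̃(u,t)| ≤ M e^{(1 - (m²+ε)/n²)t} for all t ≥ δ. In particular, e^{-(1-m²/n²)t}(β(·,t) - β̃(·,t)) → 0 uniformly as t → ∞. -/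
open Real Filter

/-! Removing the leading mode leaves the modes `k = j + m + 1`. As `k² - m² - ε ≥ j` for `ε ≤ 1`,
for `t ≥ δ` such a mode is at most `(|a_k| + |b_k|) q^j e^{(1 - (m² + ε)/n²) t}` with
`q = e^{-δ/n²} < 1`. Square-summable coefficients are bounded, so the geometric series gives `M`;
after multiplying by `e^{-(1 - m²/n²) t}` the bound `M e^{-ε t/n²}` tends to `0` uniformly in `u`. -/

theorem Summable.tsum_eq_add_tsum_nat_add_of_eq_zero {M : Type*} [AddCommMonoid M]
    [TopologicalSpace M] [ContinuousAdd M] [T2Space M] {f : ℕ → M} {m : ℕ}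
    (hf : ∀ k < m, f k = 0) (h : Summable fun j => f (j + (m + 1))) :
    ∑' k, f k = f m + ∑' j, f (j + (m + 1)) := by
  rw [← h.sum_add_tsum_nat_add', Finset.sum_range_succ,
    Finset.sum_eq_zero fun k hk => hf k (Finset.mem_range.1 hk), zero_add]

theorem exists_abs_add_abs_le_of_summable_sq {a b : ℕ → ℝ}
    (hsum : Summable fun k => a k ^ 2 + b k ^ 2) : ∃ C, ∀ k, |a k| + |b k| ≤ C := by
  refine ⟨2 * √(∑' k, (a k ^ 2 + b k ^ 2)), fun k => ?_⟩
  have hk : a k ^ 2 + b k ^ 2 ≤ ∑' k, (a k ^ 2 + b k ^ 2) :=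
    hsum.le_tsum k fun j _ => by positivity
  have ha : |a k| ≤ √(∑' k, (a k ^ 2 + b k ^ 2)) := abs_le_sqrt (by nlinarith [sq_nonneg (b k)])
  have hb : |b k| ≤ √(∑' k, (a k ^ 2 + b k ^ 2)) := abs_le_sqrt (by nlinarith [sq_nonneg (a k)])
  linarith

theorem abs_mul_cos_add_mul_sin_le (a b x : ℝ) : |a * cos x + b * sin x| ≤ |a| + |b| :=
  calc |a * cos x + b * sin x| ≤ |a| * |cos x| + |b| * |sin x| := by
        simpa only [abs_mul] using abs_add_le (a * cos x) (b * sin x)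
    _ ≤ |a| * 1 + |b| * 1 := by gcongr <;> [exact abs_cos_le_one x; exact abs_sin_le_one x]
    _ = |a| + |b| := by ring

/-- The `k`-th term of `β`, with `N` standing for `n²`. -/
noncomputable def flowMode (N : ℝ) (a b : ℕ → ℝ) (t u : ℝ) (k : ℕ) : ℝ :=
  exp ((1 - (k : ℝ) ^ 2 / N) * t) * (a k * cos (k * u) + b k * sin (k * u))

section FlowMode

variable {N δ ε t : ℝ} {a b : ℕ → ℝ} {m : ℕ}

theorem exp_tail_le_exp_mul_pow (hN : 0 < N) (hε : ε ≤ 1) (hδ : 0 ≤ δ) (ht : δ ≤ t) (j : ℕ) :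
    exp ((1 - ((j + (m + 1) : ℕ) : ℝ) ^ 2 / N) * t)
      ≤ exp ((1 - ((m : ℝ) ^ 2 + ε) / N) * t) * exp (-δ / N) ^ j := by
  rw [← exp_nat_mul, ← exp_add, exp_le_exp]
  have hgap : (j : ℝ) ≤ ((j + (m + 1) : ℕ) : ℝ) ^ 2 - (m ^ 2 + ε) := by
    push_cast; nlinarith [Nat.cast_nonneg (α := ℝ) j, Nat.cast_nonneg (α := ℝ) m]
  have hjδ : (j : ℝ) * δ ≤ (((j + (m + 1) : ℕ) : ℝ) ^ 2 - (m ^ 2 + ε)) * t := by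
    nlinarith [Nat.cast_nonneg (α := ℝ) j]
  have key : (1 - ((j + (m + 1) : ℕ) : ℝ) ^ 2 / N) * t
      = (1 - ((m : ℝ) ^ 2 + ε) / N) * t - (((j + (m + 1) : ℕ) : ℝ) ^ 2 - (m ^ 2 + ε)) * t / N := by
    field_simp; ring
  rw [key, neg_div, mul_neg, ← sub_eq_add_neg, mul_div_assoc']
  gcongr

theorem abs_flowMode_le (N t u : ℝ) (a b : ℕ → ℝ) (k : ℕ) :
    |flowMode N a b t u k| ≤ exp ((1 - (k : ℝ) ^ 2 / N) * t) * (|a k| + |b k|) := by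
  rw [flowMode, abs_mul, abs_exp]
  exact mul_le_mul_of_nonneg_left (abs_mul_cos_add_mul_sin_le _ _ _) (exp_pos _).le

theorem abs_flowMode_tail_le {C : ℝ} (hC : ∀ k, |a k| + |b k| ≤ C) (hN : 0 < N) (hε : ε ≤ 1)
    (hδ : 0 ≤ δ) (ht : δ ≤ t) (u : ℝ) (j : ℕ) :
    |flowMode N a b t u (j + (m + 1))|
      ≤ C * exp ((1 - ((m : ℝ) ^ 2 + ε) / N) * t) * exp (-δ / N) ^ j := by
  have hC0 : 0 ≤ C := (add_nonneg (abs_nonneg _) (abs_nonneg _)).trans (hC 0)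
  calc |flowMode N a b t u (j + (m + 1))|
      ≤ exp ((1 - ((j + (m + 1) : ℕ) : ℝ) ^ 2 / N) * t) * C :=
        (abs_flowMode_le N t u a b _).trans (mul_le_mul_of_nonneg_left (hC _) (exp_pos _).le)
    _ ≤ exp ((1 - ((m : ℝ) ^ 2 + ε) / N) * t) * exp (-δ / N) ^ j * C :=
        mul_le_mul_of_nonneg_right (exp_tail_le_exp_mul_pow hN hε hδ ht j) hC0
    _ = _ := by ring

theorem abs_tsum_flowMode_sub_le {C : ℝ} (hC : ∀ k, |a k| + |b k| ≤ C)
    (hlow : ∀ k < m, a k = 0 ∧ b k = 0) (hN : 0 < N) (hε : ε ≤ 1) (hδ : 0 < δ) (ht : δ ≤ t)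
    (u : ℝ) :
    |∑' k, flowMode N a b t u k - flowMode N a b t u m|
      ≤ C * (1 - exp (-δ / N))⁻¹ * exp ((1 - ((m : ℝ) ^ 2 + ε) / N) * t) := by
  have hq : exp (-δ / N) < 1 := exp_lt_one_iff.2 (div_neg_of_neg_of_pos (neg_neg_of_pos hδ) hN)
  have hgeom := (hasSum_geometric_of_lt_one (exp_pos _).le hq).mul_left
    (C * exp ((1 - ((m : ℝ) ^ 2 + ε) / N) * t))
  have hbound : ∀ j, ‖flowMode N a b t u (j + (m + 1))‖
      ≤ C * exp ((1 - ((m : ℝ) ^ 2 + ε) / N) * t) * exp (-δ / N) ^ j :=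
    abs_flowMode_tail_le hC hN hε hδ.le ht u
  have hzero : ∀ k < m, flowMode N a b t u k = 0 := fun k hk => by
    simp [flowMode, (hlow k hk).1, (hlow k hk).2]
  rw [(hgeom.summable.of_norm_bounded hbound).tsum_eq_add_tsum_nat_add_of_eq_zero hzero,
    add_sub_cancel_left, mul_right_comm]
  exact tsum_of_norm_bounded hgeom hbound

end FlowMode

theorem tendsto_iSup_abs_exp_mul_of_abs_le {ι : Type*} [Nonempty ι] {d : ι → ℝ → ℝ}
    {c κ M δ : ℝ} (hκ : κ < c) (h : ∀ t ≥ δ, ∀ i, |d i t| ≤ M * exp (κ * t)) :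
    Tendsto (fun t => ⨆ i, |exp (-c * t) * d i t|) atTop (nhds 0) := by
  have hbound : ∀ t ≥ δ, ∀ i, |exp (-c * t) * d i t| ≤ M * exp ((κ - c) * t) := by
    intro t ht i
    calc |exp (-c * t) * d i t| ≤ exp (-c * t) * (M * exp (κ * t)) := by
          rw [abs_mul, abs_exp]
          exact mul_le_mul_of_nonneg_left (h t ht i) (exp_pos _).le
      _ = M * exp ((κ - c) * t) := by rw [mul_left_comm, ← exp_add]; ring_nf
  have hlim : Tendsto (fun t => M * exp ((κ - c) * t)) atTop (nhds 0) := by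
    have hexp : Tendsto (fun t => (κ - c) * t) atTop atBot :=
      (tendsto_const_mul_atBot_of_neg (sub_neg.2 hκ)).2 tendsto_id
    simpa using (tendsto_exp_atBot.comp hexp).const_mul M
  refine squeeze_zero' (.of_forall fun t => iSup_nonneg fun i => abs_nonneg _) ?_ hlim
  filter_upwards [eventually_ge_atTop δ] with t ht
  exact ciSup_le (hbound t ht)

theorem beta_decay_to_self_similar_general
    (n m : ℕ) (hn : 1 ≤ n)
    (a b : ℕ → ℝ)
    (hsum : Summable (fun k => a k ^ 2 + b k ^ 2))
    (hlow : ∀ k < m, a k = 0 ∧ b k = 0)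
    (β βt : ℝ → ℝ → ℝ)
    (hβ : ∀ u t, β u t = ∑' k : ℕ,
      Real.exp ((1 - (k : ℝ) ^ 2 / (n : ℝ) ^ 2) * t)
        * (a k * Real.cos (k * u) + b k * Real.sin (k * u)))
    (hβt : ∀ u t, βt u t
      = Real.exp ((1 - (m : ℝ) ^ 2 / (n : ℝ) ^ 2) * t)
        * (a m * Real.cos (m * u) + b m * Real.sin (m * u))) :
    (∀ ε ∈ Set.Ioo (0 : ℝ) 1, ∀ δ > (0 : ℝ), ∃ M > (0 : ℝ), ∀ t ≥ δ, ∀ u : ℝ,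
      |β u t - βt u t| ≤ M * Real.exp ((1 - ((m : ℝ) ^ 2 + ε) / (n : ℝ) ^ 2) * t)) ∧
    Tendsto (fun t : ℝ => ⨆ u : ℝ,
        |Real.exp (-(1 - (m : ℝ) ^ 2 / (n : ℝ) ^ 2) * t) * (β u t - βt u t)|)
      atTop (nhds 0) := by
  have hN : (0 : ℝ) < (n : ℝ) ^ 2 := pow_pos (Nat.cast_pos.2 hn) 2
  have hdiff : ∀ u t, β u t - βt u t
      = ∑' k, flowMode ((n : ℝ) ^ 2) a b t u k - flowMode ((n : ℝ) ^ 2) a b t u m :=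
    fun u t => by rw [hβ, hβt]; rfl
  obtain ⟨C, hC⟩ := exists_abs_add_abs_le_of_summable_sq hsum
  have hdecay : ∀ ε ∈ Set.Ioo (0 : ℝ) 1, ∀ δ > (0 : ℝ), ∃ M > (0 : ℝ), ∀ t ≥ δ, ∀ u : ℝ,
      |β u t - βt u t| ≤ M * Real.exp ((1 - ((m : ℝ) ^ 2 + ε) / (n : ℝ) ^ 2) * t) := by
    intro ε hε δ hδ
    refine ⟨max (C * (1 - exp (-δ / (n : ℝ) ^ 2))⁻¹) 1, by positivity, fun t ht u => ?_⟩
    rw [hdiff]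
    exact (abs_tsum_flowMode_sub_le hC hlow hN hε.2.le hδ ht u).trans
      (mul_le_mul_of_nonneg_right (le_max_left _ _) (exp_pos _).le)
  refine ⟨hdecay, ?_⟩
  obtain ⟨M, -, hM⟩ := hdecay (1 / 2) ⟨by norm_num, by norm_num⟩ 1 one_pos
  refine tendsto_iSup_abs_exp_mul_of_abs_le ?_ fun t ht u => hM t ht u
  have : (0 : ℝ) < 1 / 2 / (n : ℝ) ^ 2 := by positivity
  rw [add_div]
  linarith

/-- Exponential decay of the difference between the flow's `β` and the self-similar `β̃`. -/
theorem beta_decay_to_self_similar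
    (n m : ℕ) (hn : 1 ≤ n) (hmn : m ≠ n)
    (a b : ℕ → ℝ)
    (hsum : Summable (fun k => a k ^ 2 + b k ^ 2))
    (hlow : ∀ k < m, a k = 0 ∧ b k = 0)
    (hm : (a m, b m) ≠ ((0 : ℝ), (0 : ℝ)))
    (β βt : ℝ → ℝ → ℝ)
    (hβ : ∀ u t, β u t = ∑' k : ℕ,
      Real.exp ((1 - (k : ℝ) ^ 2 / (n : ℝ) ^ 2) * t)
        * (a k * Real.cos (k * u) + b k * Real.sin (k * u)))
    (hβt : ∀ u t, βt u t
      = Real.exp ((1 - (m : ℝ) ^ 2 / (n : ℝ) ^ 2) * t)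
        * (a m * Real.cos (m * u) + b m * Real.sin (m * u))) :
    (∀ ε ∈ Set.Ioo (0 : ℝ) 1, ∀ δ > (0 : ℝ), ∃ M > (0 : ℝ), ∀ t ≥ δ, ∀ u : ℝ,
      |β u t - βt u t| ≤ M * Real.exp ((1 - ((m : ℝ) ^ 2 + ε) / (n : ℝ) ^ 2) * t)) ∧
    Tendsto (fun t : ℝ => ⨆ u : ℝ,
        |Real.exp (-(1 - (m : ℝ) ^ 2 / (n : ℝ) ^ 2) * t) * (β u t - βt u t)|)
      atTop (nhds 0) :=
  beta_decay_to_self_similar_general n m hn a b hsum hlow β βt hβ hβt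
end

section
/- Let n ∈ ℕ, n ≥ 1, a ∈ ℝ \ {0}, and define X*(u) = (a/n)(sin(nu), -cos(nu)), ν*(u) = (sin(nu), -cos(nu)), λ*(t) = eᵗ. Then (λ*(t)X*(u), ν*(u)) is a self-similar solution of the inverse curvature flow: it is a Legendre curve family with Legendre curvature (ℓ, β)(u,t) = (n, a eᵗ) and satisfies ∂ₜ(λ*X*) = (β/ℓ)ν* + (∂ᵤβ/ℓ²)μ*, where μ* = Jν* = (cos(nu), sin(nu)). -/
open Real

/-- The expanding circle `(eᵗ·(a/n)(sin(nu), -cos(nu)), (sin(nu), -cos(nu)))` is a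
self-similar solution of the inverse curvature flow with curvature `(ℓ, β) = (n, aeᵗ)`. -/
theorem circle_self_similar
    (n : ℕ) (hn : 1 ≤ n) (a : ℝ) (ha : a ≠ 0)
    (Xs νs μs : ℝ → ℝ × ℝ)
    (hνs : ∀ u, νs u = (Real.sin (n * u), -Real.cos (n * u)))
    (hμs : ∀ u, μs u = (Real.cos (n * u), Real.sin (n * u)))
    (hXs : ∀ u, Xs u = (a / (n : ℝ)) • (Real.sin (n * u), -Real.cos (n * u))) :
    ∀ u t : ℝ,
      (deriv (fun u' => Real.exp t • Xs u') u = (a * Real.exp t) • μs u) ∧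
      (dot (deriv νs u) (μs u) = n) ∧
      (deriv (fun t' => Real.exp t' • Xs u) t
        = ((a * Real.exp t) / (n : ℝ)) • νs u
          + ((deriv (fun _ : ℝ => a * Real.exp t) u) / (n : ℝ) ^ 2) • μs u) := by
  intro u t
  have hn0 : (n : ℝ) ≠ 0 := Nat.cast_ne_zero.mpr (by omega)
  have hlin : HasDerivAt (fun u' : ℝ => (n : ℝ) * u') (n : ℝ) u := by
    simpa using (hasDerivAt_id u).const_mul (n : ℝ)
  have hsin : HasDerivAt (fun u' => Real.sin ((n : ℝ) * u')) ((n : ℝ) * Real.cos (n * u)) u := by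
    simpa [Function.comp_def, mul_comm] using (Real.hasDerivAt_sin ((n : ℝ) * u)).comp u hlin
  have hcos : HasDerivAt (fun u' => Real.cos ((n : ℝ) * u')) (-((n : ℝ) * Real.sin (n * u))) u := by
    simpa [Function.comp_def, mul_comm] using (Real.hasDerivAt_cos ((n : ℝ) * u)).comp u hlin
  refine ⟨?_, ?_, ?_⟩
  · have H : HasDerivAt (fun u' => (Real.exp t * (a / n) * Real.sin (n * u'),
            -(Real.exp t * (a / n) * Real.cos (n * u')))) _ u := ((hsin.const_mul (Real.exp t * (a / n))).prodMk
      ((hcos.const_mul (Real.exp t * (a / n))).neg))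
    have hfun : (fun u' => Real.exp t • Xs u')
        = fun u' => (Real.exp t * (a / n) * Real.sin (n * u'),
            -(Real.exp t * (a / n) * Real.cos (n * u'))) := by
      funext u'
      simp [hXs, Prod.ext_iff, smul_eq_mul]
      constructor <;> ring
    rw [hfun, H.deriv, hμs, Prod.ext_iff]
    simp [smul_eq_mul]
    constructor <;> field_simp
  · have h2 : HasDerivAt νs ((n : ℝ) * Real.cos (n * u), (n : ℝ) * Real.sin (n * u)) u := by
      have H := hsin.prodMk hcos.neg
      have hfun : νs = fun u' => (Real.sin ((n : ℝ) * u'), -Real.cos ((n : ℝ) * u')) :=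
        funext hνs
      rw [hfun]
      simpa using H
    rw [h2.deriv, hμs]
    simp [dot]
    linear_combination (n : ℝ) * Real.sin_sq_add_cos_sq ((n : ℝ) * u)
  · have h3 : HasDerivAt (fun t' => Real.exp t' • Xs u) (Real.exp t • Xs u) t :=
      (Real.hasDerivAt_exp t).smul_const (Xs u)
    rw [h3.deriv, deriv_const]
    simp [hXs, hνs, Prod.ext_iff, smul_eq_mul]
    constructor <;> field_simp
end
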